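/- arXiv:2207.12717 — 7 statements merged into one kernel-verified Lean document; each statement's English description precedes it below -/
import Mathlib

section
/- Under the parametrized Sinkhorn setup, there exist a map x̄ : Ω → ℝ^n satisfying F(x̄(θ), θ) = x̄(θ) for every θ ∈ Ω such that θ ↦ L_center(x̄(θ)) is continuous on Ω, and continuous functions c : Ω → ℝ_{>0} and ρ : Ω → (0,1), such that for every k ∈ ℕ and every θ ∈ Ω, ‖L_center(x_k(θ)) − L_center(x̄(θ))‖_∞ ≤ c(θ) ρ(θ)^k. -/
/-!
Work in the oscillation seminorm `osc v = max v - min v`, which ignores constant shifts. The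
Sinkhorn map is `x ↦ log a - LSE_K (log b - LSE_Kᵀ x)`, where `LSE_M z = log (M (exp z))`.
`LSE_Kᵀ` does not increase oscillation, and by Birkhoff's argument `LSE_K` multiplies an
oscillation bounded by `Δ` by at most `1 - η² e^{-Δ}`, where `η = min K / max K`. Every image of
the map has oscillation at most `osc (log a) - log η`, so the increments `x_{k+1} - x_k` shrink
geometrically in oscillation and the centered iterates are Cauchy in the sup norm. Their limit is
a fixed point of the map up to an additive constant, and that constant vanishes because
`∑ a = ∑ b`. All constants depend continuously on `θ`, so the convergence is locally uniform
and the limit is continuous in `θ`.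
-/

open Finset Real Filter Topology Function

noncomputable section

theorem continuousOn_of_norm_sub_le_geometric {X E : Type*} [TopologicalSpace X]
    [SeminormedAddCommGroup E] {f : ℕ → X → E} {g : X → E} {c ρ : X → ℝ} {s : Set X}
    (hf : ∀ k, ContinuousOn (f k) s) (hc : ContinuousOn c s) (hρ : ContinuousOn ρ s)
    (hρ0 : ∀ θ ∈ s, 0 ≤ ρ θ) (hρ1 : ∀ θ ∈ s, ρ θ < 1)
    (hfg : ∀ k, ∀ θ ∈ s, ‖f k θ - g θ‖ ≤ c θ * ρ θ ^ k) : ContinuousOn g s := by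
  suffices TendstoLocallyUniformlyOn f g atTop s from this.continuousOn (Frequently.of_forall hf)
  refine Metric.tendstoLocallyUniformlyOn_iff.2 fun ε hε θ₀ hθ₀ => ?_
  obtain ⟨r, hρr, hr1⟩ := exists_between (hρ1 θ₀ hθ₀)
  have hnear : ∀ᶠ θ in 𝓝[s] θ₀, c θ < c θ₀ + 1 ∧ ρ θ < r :=
    ((hc θ₀ hθ₀).eventually (gt_mem_nhds (lt_add_one _))).and
      ((hρ θ₀ hθ₀).eventually (gt_mem_nhds hρr))
  have hsmall : ∀ᶠ k in atTop, (c θ₀ + 1) * r ^ k < ε := by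
    have := (tendsto_pow_atTop_nhds_zero_of_lt_one ((hρ0 θ₀ hθ₀).trans hρr.le) hr1).const_mul
      (c θ₀ + 1)
    rw [mul_zero] at this
    exact this.eventually (gt_mem_nhds hε)
  refine ⟨_, inter_mem hnear self_mem_nhdsWithin, hsmall.mono fun k hk θ ⟨⟨hcθ, hρθ⟩, hθ⟩ => ?_⟩
  have hc0 : 0 ≤ c θ := (norm_nonneg _).trans (by simpa using hfg 0 θ hθ)
  have hρθ0 := hρ0 θ hθ
  calc dist (g θ) (f k θ) = ‖f k θ - g θ‖ := by rw [dist_comm, dist_eq_norm]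
    _ ≤ c θ * ρ θ ^ k := hfg k θ hθ
    _ ≤ (c θ₀ + 1) * r ^ k := by gcongr; linarith
    _ < ε := hk

theorem log_one_sub_mul_exp_add_le {t Δ Δs : ℝ} (ht0 : 0 ≤ t) (ht1 : t ≤ 1) (hΔ : 0 ≤ Δ)
    (hΔs : Δ ≤ Δs) : log ((1 - t) * exp Δ + t) ≤ (1 - t * exp (-Δs)) * Δ := by
  have hpos : 0 < 1 - t + t * exp (-Δ) := by
    have he1 : exp (-Δ) ≤ 1 := exp_le_one_iff.2 (by linarith)
    nlinarith [exp_pos (-Δ), mul_le_mul_of_nonneg_right ht1 (sub_nonneg.2 he1)]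
  have hsplit : (1 - t) * exp Δ + t = exp Δ * (1 - t + t * exp (-Δ)) := by
    rw [exp_neg]; field_simp
  -- `1 - e^{-Δ} ≥ Δ e^{-Δ}` is `e^Δ ≥ 1 + Δ` multiplied by `e^{-Δ}`
  have hgap : Δ * exp (-Δs) ≤ 1 - exp (-Δ) := by
    have h1 : Δ * exp (-Δs) ≤ Δ * exp (-Δ) := by gcongr
    have h2 : (Δ + 1) * exp (-Δ) ≤ exp Δ * exp (-Δ) :=
      mul_le_mul_of_nonneg_right (add_one_le_exp Δ) (exp_pos _).le
    rw [← exp_add, add_neg_cancel, exp_zero] at h2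
    linarith
  calc log ((1 - t) * exp Δ + t) = Δ + log (1 - t + t * exp (-Δ)) := by
        rw [hsplit, log_mul (exp_ne_zero _) hpos.ne', log_exp]
    _ ≤ Δ + (1 - t + t * exp (-Δ) - 1) := by gcongr; exact log_le_sub_one_of_pos hpos
    _ ≤ (1 - t * exp (-Δs)) * Δ := by nlinarith

/-- The core of Birkhoff's contraction estimate: for two comparable rows `α`, `β` of a kernel,
the ratio `(∑ α q / ∑ α p) / (∑ β q / ∑ β p)` is at most `(1 - η²) U + η²`. -/
theorem sum_mul_mul_sum_le {κ : Type*} [Fintype κ] {α β p q : κ → ℝ} {η U : ℝ}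
    (hη0 : 0 ≤ η) (hη1 : η ≤ 1) (hU : 0 ≤ U) (hα : ∀ j, 0 ≤ α j)
    (hβα : ∀ j, η * β j ≤ α j) (hαβ : ∀ j, η * α j ≤ β j) (hp : ∀ j, 0 ≤ p j)
    (hpq : ∀ j, p j ≤ q j) (hqU : ∀ j, q j ≤ U * p j) :
    (∑ j, α j * q j) * (∑ j, β j * p j) ≤
      ((1 - η ^ 2) * U + η ^ 2) * (∑ j, β j * q j) * (∑ j, α j * p j) := by
  have hβ : ∀ j, 0 ≤ β j := fun j => (mul_nonneg hη0 (hα j)).trans (hαβ j)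
  have hβpq : ∑ j, β j * p j ≤ ∑ j, β j * q j :=
    sum_le_sum fun j _ => mul_le_mul_of_nonneg_left (hpq j) (hβ j)
  have hgap : η * (U * ∑ j, β j * p j - ∑ j, β j * q j) ≤ U * ∑ j, α j * p j - ∑ j, α j * q j := by
    simp only [mul_sum, ← sum_sub_distrib]
    refine sum_le_sum fun j _ => ?_
    have := mul_le_mul_of_nonneg_right (hβα j) (sub_nonneg.2 (hqU j))
    linarith
  have hαp : η * ∑ j, α j * p j ≤ ∑ j, β j * p j := by
    rw [mul_sum]
    exact sum_le_sum fun j _ => by nlinarith [hαβ j, hp j]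
  have hαq : ∑ j, α j * q j ≤ U * ∑ j, α j * p j := by
    rw [mul_sum]
    exact sum_le_sum fun j _ => by nlinarith [hqU j, hα j]
  have hSα : 0 ≤ ∑ j, α j * p j := sum_nonneg fun j _ => mul_nonneg (hα j) (hp j)
  have hprod := mul_le_mul hgap hαp (mul_nonneg hη0 hSα) (sub_nonneg.2 hαq)
  have hη2 : 0 ≤ 1 - η ^ 2 := sub_nonneg.2 (pow_le_one₀ hη0 hη1)
  nlinarith [mul_le_mul_of_nonneg_left hβpq (mul_nonneg (mul_nonneg hη2 hU) hSα)]

section Center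

variable {ι : Type*} [Fintype ι]

def center : (ι → ℝ) →ₗ[ℝ] ι → ℝ where
  toFun v i := v i - (∑ j, v j) / Fintype.card ι
  map_add' v w := by ext i; simp only [Pi.add_apply, sum_add_distrib]; ring
  map_smul' c v := by
    ext i; simp only [Pi.smul_apply, smul_eq_mul, ← mul_sum, RingHom.id_apply]; ring

theorem center_apply (v : ι → ℝ) (i : ι) :
    center v i = v i - (∑ j, v j) / Fintype.card ι := rfl

theorem center_const [Nonempty ι] (t : ℝ) : center (const ι t) = 0 := by
  ext i
  simp [center_apply]

theorem center_add_const_mean (v : ι → ℝ) :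
    center v + const ι ((∑ j, v j) / Fintype.card ι) = v := by
  ext i
  simp [center_apply]

theorem continuous_center : Continuous (center : (ι → ℝ) → ι → ℝ) :=
  LinearMap.continuous_of_finiteDimensional _

end Center

section Oscillation

variable {ι : Type*} [Fintype ι] [Nonempty ι]

def osc (v : ι → ℝ) : ℝ :=
  univ.sup' univ_nonempty fun q : ι × ι => v q.1 - v q.2

theorem sub_le_osc (v : ι → ℝ) (i j : ι) : v i - v j ≤ osc v :=
  le_sup' (fun q : ι × ι => v q.1 - v q.2) (mem_univ (i, j))

theorem osc_le_iff {v : ι → ℝ} {E : ℝ} : osc v ≤ E ↔ ∀ i j, v i - v j ≤ E := by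
  simp only [osc, sup'_le_iff, mem_univ, true_implies, Prod.forall]

theorem osc_nonneg (v : ι → ℝ) : 0 ≤ osc v := by
  simpa using sub_le_osc v (Classical.arbitrary ι) (Classical.arbitrary ι)

theorem osc_sub_le (v w : ι → ℝ) : osc (v - w) ≤ osc v + osc w :=
  osc_le_iff.2 fun i j => by
    have := sub_le_osc v i j
    have := sub_le_osc w j i
    simp only [Pi.sub_apply]
    linarith

theorem continuous_osc : Continuous (osc : (ι → ℝ) → ℝ) :=
  Continuous.finset_sup'_apply _ fun q _ => (continuous_apply q.1).sub (continuous_apply q.2)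

theorem norm_center_le_osc (v : ι → ℝ) : ‖center v‖ ≤ osc v := by
  have hcard : (0 : ℝ) < Fintype.card ι := by exact_mod_cast Fintype.card_pos
  refine (pi_norm_le_iff_of_nonneg (osc_nonneg v)).2 fun i => ?_
  have hlo : ∑ j, (v i - osc v) ≤ ∑ j, v j :=
    sum_le_sum fun j _ => by linarith [sub_le_osc v i j]
  have hhi : ∑ j, v j ≤ ∑ j, (v i + osc v) :=
    sum_le_sum fun j _ => by linarith [sub_le_osc v j i]
  simp only [sum_const, card_univ, nsmul_eq_mul] at hlo hhi
  rw [center_apply, Real.norm_eq_abs, abs_le]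
  constructor
  · rw [neg_le_sub_iff_le_add, div_le_iff₀ hcard]; linarith
  · rw [sub_le_comm, le_div_iff₀ hcard]; linarith

end Oscillation

def contractionRate (η D : ℝ) : ℝ := 1 - η ^ 2 * exp (-D)

theorem contractionRate_mem_Icc {η D : ℝ} (hη0 : 0 ≤ η) (hη1 : η ≤ 1) (hD : 0 ≤ D) :
    contractionRate η D ∈ Set.Icc 0 1 := by
  have hη2 : η ^ 2 ≤ 1 := pow_le_one₀ hη0 hη1
  have hexp : exp (-D) ≤ 1 := exp_le_one_iff.2 (by linarith)
  constructor <;> unfold contractionRate <;> nlinarith [exp_pos (-D), sq_nonneg η]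

theorem contractionRate_mem_Ioo {η D : ℝ} (hη0 : 0 < η) (hη1 : η ≤ 1) (hD : 0 < D) :
    contractionRate η D ∈ Set.Ioo 0 1 := by
  have hη2 : η ^ 2 ≤ 1 := pow_le_one₀ hη0.le hη1
  have hexp : exp (-D) < 1 := exp_lt_one_iff.2 (by linarith)
  constructor <;> unfold contractionRate <;> nlinarith [exp_pos (-D), pow_pos hη0 2]

section LogSumExp

variable {ι κ : Type*} [Fintype κ]

def logSumExp (M : ι → κ → ℝ) (z : κ → ℝ) : ι → ℝ := fun i => log (∑ j, M i j * exp (z j))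

theorem sum_mul_exp_pos [Nonempty κ] {M : ι → κ → ℝ} (hM : ∀ i j, 0 < M i j) (z : κ → ℝ)
    (i : ι) : 0 < ∑ j, M i j * exp (z j) :=
  sum_pos (fun j _ => mul_pos (hM i j) (exp_pos _)) univ_nonempty

theorem logSumExp_add_const [Nonempty κ] {M : ι → κ → ℝ} (hM : ∀ i j, 0 < M i j)
    (z : κ → ℝ) (t : ℝ) : logSumExp M (z + const κ t) = logSumExp M z + const ι t := by
  ext i
  have hsum : ∑ j, M i j * exp (z j + t) = exp t * ∑ j, M i j * exp (z j) := by
    rw [mul_sum]; exact sum_congr rfl fun j _ => by rw [exp_add]; ring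
  simp only [logSumExp, Pi.add_apply, const_apply, hsum]
  rw [log_mul (exp_ne_zero t) (sum_mul_exp_pos hM z i).ne', log_exp, add_comm]

variable [Fintype ι] [Nonempty ι] [Nonempty κ] {M : ι → κ → ℝ} {η : ℝ}

theorem osc_logSumExp_le (hM : ∀ i j, 0 < M i j) (hη : 0 < η)
    (hηM : ∀ i i' j, η * M i' j ≤ M i j) (z : κ → ℝ) : osc (logSumExp M z) ≤ -log η := by
  refine osc_le_iff.2 fun i i' => ?_
  have hle : η * ∑ j, M i j * exp (z j) ≤ ∑ j, M i' j * exp (z j) := by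
    rw [mul_sum]
    exact sum_le_sum fun j _ => by
      rw [← mul_assoc]; exact mul_le_mul_of_nonneg_right (hηM i' i j) (exp_pos _).le
  have := log_le_log (mul_pos hη (sum_mul_exp_pos hM z i)) hle
  rw [log_mul hη.ne' (sum_mul_exp_pos hM z i).ne'] at this
  simp only [logSumExp]
  linarith

theorem osc_logSumExp_sub_le (hM : ∀ i j, 0 < M i j) (hη0 : 0 ≤ η) (hη1 : η ≤ 1)
    (hηM : ∀ i i' j, η * M i' j ≤ M i j) {z w : κ → ℝ} {Δ Δs : ℝ} (h : osc (z - w) ≤ Δ)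
    (hΔ : Δ ≤ Δs) : osc (logSumExp M z - logSumExp M w) ≤ contractionRate η Δs * Δ := by
  -- shift `w` by `min (z - w)`, so that `exp (z - w')` takes values in `[1, exp Δ]`
  obtain ⟨j₀, -, hj₀⟩ := exists_min_image univ (z - w) univ_nonempty
  set w' := w + const κ ((z - w) j₀)
  have hlow : ∀ j, exp (w' j) ≤ exp (z j) := fun j => by
    have := hj₀ j (mem_univ j)
    simp only [w', Pi.add_apply, Pi.sub_apply, const_apply] at this ⊢
    gcongr
    linarith
  have hupp : ∀ j, exp (z j) ≤ exp Δ * exp (w' j) := fun j => by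
    have := (sub_le_osc (z - w) j j₀).trans h
    simp only [w', Pi.add_apply, Pi.sub_apply, const_apply] at this ⊢
    rw [← exp_add]
    gcongr
    linarith
  have hΔ0 : 0 ≤ Δ := (osc_nonneg _).trans h
  have hη2 : η ^ 2 ≤ 1 := pow_le_one₀ hη0 hη1
  refine osc_le_iff.2 fun i i' => ?_
  have key := sum_mul_mul_sum_le hη0 hη1 (exp_pos Δ).le (fun j => (hM i j).le) (hηM i i')
    (hηM i' i) (fun j => (exp_pos (w' j)).le) hlow hupp
  have hc : 0 < (1 - η ^ 2) * exp Δ + η ^ 2 := by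
    nlinarith [mul_le_mul_of_nonneg_left (one_le_exp hΔ0) (sub_nonneg.2 hη2)]
  have hlog := log_le_log (mul_pos (sum_mul_exp_pos hM z i) (sum_mul_exp_pos hM w' i')) key
  rw [log_mul (sum_mul_exp_pos hM z i).ne' (sum_mul_exp_pos hM w' i').ne',
    mul_assoc, log_mul hc.ne' (mul_pos (sum_mul_exp_pos hM z i') (sum_mul_exp_pos hM w' i)).ne',
    log_mul (sum_mul_exp_pos hM z i').ne' (sum_mul_exp_pos hM w' i).ne'] at hlog
  have hshift : ∀ i, logSumExp M w' i = logSumExp M w i + (z - w) j₀ :=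
    congrFun (logSumExp_add_const hM w _)
  have hrate := log_one_sub_mul_exp_add_le (sq_nonneg η) hη2 hΔ0 hΔ
  simp only [logSumExp] at hshift
  simp only [Pi.sub_apply, logSumExp, contractionRate]
  linarith [hshift i, hshift i']

end LogSumExp

section SinkhornMap

variable {ι κ : Type*} [Fintype ι] [Fintype κ]

def sinkhornMap (K : ι → κ → ℝ) (a : ι → ℝ) (b : κ → ℝ) (x : ι → ℝ) : ι → ℝ :=
  fun i => log (a i) - log (∑ j, K i j * (b j / ∑ i', K i' j * exp (x i')))

variable [Nonempty ι] {K : ι → κ → ℝ} {a : ι → ℝ} {b : κ → ℝ}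

theorem sinkhornMap_eq_sub_logSumExp (hK : ∀ i j, 0 < K i j) (hb : ∀ j, 0 < b j) (x : ι → ℝ) :
    sinkhornMap K a b x =
      (fun i => log (a i)) - logSumExp K ((fun j => log (b j)) - logSumExp (swap K) x) := by
  ext i
  simp only [sinkhornMap, logSumExp, Pi.sub_apply]
  congr 2
  refine sum_congr rfl fun j _ => ?_
  rw [exp_sub, exp_log (hb j), exp_log (sum_mul_exp_pos (M := swap K) (fun j i => hK i j) x j)]

variable [Nonempty κ]

theorem sinkhornMap_add_const (hK : ∀ i j, 0 < K i j) (hb : ∀ j, 0 < b j) (x : ι → ℝ) (t : ℝ) :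
    sinkhornMap K a b (x + const ι t) = sinkhornMap K a b x + const ι t := by
  have hdual : (fun j => log (b j)) - (logSumExp (swap K) x + const κ t) =
      (fun j => log (b j)) - logSumExp (swap K) x + const κ (-t) := by
    ext j; simp only [Pi.add_apply, Pi.sub_apply, const_apply]; ring
  rw [sinkhornMap_eq_sub_logSumExp hK hb, sinkhornMap_eq_sub_logSumExp hK hb,
    logSumExp_add_const (fun j i => hK i j), hdual, logSumExp_add_const hK]
  ext i; simp only [Pi.add_apply, Pi.sub_apply, const_apply]; ring

variable {η : ℝ}

theorem osc_sinkhornMap_le (hK : ∀ i j, 0 < K i j) (hb : ∀ j, 0 < b j) (hη : 0 < η)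
    (hηK : ∀ i i' j, η * K i' j ≤ K i j) (x : ι → ℝ) :
    osc (sinkhornMap K a b x) ≤ osc (fun i => log (a i)) - log η := by
  rw [sinkhornMap_eq_sub_logSumExp hK hb]
  set u := (fun j => log (b j)) - logSumExp (swap K) x
  linarith [osc_sub_le (fun i => log (a i)) (logSumExp K u), osc_logSumExp_le hK hη hηK u]

theorem osc_sinkhornMap_sub_le (hK : ∀ i j, 0 < K i j) (hb : ∀ j, 0 < b j) (hη0 : 0 ≤ η)
    (hη1 : η ≤ 1) (hηK : ∀ i i' j, η * K i' j ≤ K i j) {x y : ι → ℝ} {Δ Δs : ℝ}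
    (h : osc (x - y) ≤ Δ) (hΔ : Δ ≤ Δs) :
    osc (sinkhornMap K a b x - sinkhornMap K a b y) ≤ contractionRate η Δs * Δ := by
  -- with `η = 0` the contraction estimate says that `logSumExp` never increases oscillation
  have hdual : osc (((fun j => log (b j)) - logSumExp (swap K) y) -
      ((fun j => log (b j)) - logSumExp (swap K) x)) ≤ Δ := by
    rw [sub_sub_sub_cancel_left]
    simpa [contractionRate] using osc_logSumExp_sub_le (M := swap K) (η := 0) (fun j i => hK i j)
      le_rfl zero_le_one (fun j j' i => by simpa using (hK i j).le) h le_rfl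
  rw [sinkhornMap_eq_sub_logSumExp hK hb, sinkhornMap_eq_sub_logSumExp hK hb,
    sub_sub_sub_cancel_left]
  exact osc_logSumExp_sub_le hK hη0 hη1 hηK hdual hΔ

theorem sinkhornMap_eq_self_of_eq_add_const (hK : ∀ i j, 0 < K i j) (ha : ∀ i, 0 < a i)
    (hb : ∀ j, 0 < b j) (hab : ∑ i, a i = ∑ j, b j) {x : ι → ℝ} {t : ℝ}
    (h : sinkhornMap K a b x = x + const ι t) : sinkhornMap K a b x = x := by
  set σ : κ → ℝ := fun j => ∑ i', K i' j * exp (x i')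
  set T : ι → ℝ := fun i => ∑ j, K i j * (b j / σ j)
  have hσ : ∀ j, 0 < σ j := sum_mul_exp_pos (M := swap K) (fun j i => hK i j) x
  have hT : ∀ i, 0 < T i := fun i =>
    sum_pos (fun j _ => mul_pos (hK i j) (div_pos (hb j) (hσ j))) univ_nonempty
  have hrow : ∀ i, exp (sinkhornMap K a b x i) * T i = a i := fun i => by
    rw [sinkhornMap, exp_sub, exp_log (ha i), exp_log (hT i), div_mul_cancel₀ _ (hT i).ne']
  have hcol : ∑ i, exp (x i) * T i = ∑ j, b j := by
    simp only [T, mul_sum]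
    rw [sum_comm]
    refine sum_congr rfl fun j _ => ?_
    simp only [mul_div_assoc', ← mul_assoc, ← sum_div]
    rw [div_eq_iff (hσ j).ne', mul_sum]
    exact sum_congr rfl fun i _ => by ring
  have hmass : ∑ i, a i = exp t * ∑ j, b j := by
    rw [← hcol, mul_sum]
    refine sum_congr rfl fun i _ => ?_
    rw [← hrow i, h, Pi.add_apply, const_apply, exp_add]
    ring
  have ht : t = 0 := by
    have hbpos : 0 < ∑ j, b j := sum_pos (fun j _ => hb j) univ_nonempty
    have : exp t = 1 := by nlinarith [hab]
    simpa using this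
  rw [h, ht]
  ext i; simp

theorem ContinuousOn.sinkhornMap {X : Type*} [TopologicalSpace X] {K : X → ι → κ → ℝ}
    {a : X → ι → ℝ} {b : X → κ → ℝ} {x : X → ι → ℝ} {s : Set X} (hKc : ContinuousOn K s)
    (hac : ContinuousOn a s) (hbc : ContinuousOn b s) (hxc : ContinuousOn x s)
    (hK : ∀ θ ∈ s, ∀ i j, 0 < K θ i j) (ha : ∀ θ ∈ s, ∀ i, 0 < a θ i)
    (hb : ∀ θ ∈ s, ∀ j, 0 < b θ j) :
    ContinuousOn (fun θ => _root_.sinkhornMap (K θ) (a θ) (b θ) (x θ)) s := by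
  have hσ : ∀ θ ∈ s, ∀ j, 0 < ∑ i', K θ i' j * exp (x θ i') := fun θ hθ j =>
    sum_pos (fun i' _ => mul_pos (hK θ hθ i' j) (exp_pos _)) univ_nonempty
  have hT : ∀ θ ∈ s, ∀ i, 0 < ∑ j, K θ i j * (b θ j / ∑ i', K θ i' j * exp (x θ i')) :=
    fun θ hθ i => sum_pos (fun j _ => mul_pos (hK θ hθ i j) (div_pos (hb θ hθ j) (hσ θ hθ j)))
      univ_nonempty
  refine continuousOn_pi.2 fun i => ?_
  unfold _root_.sinkhornMap
  fun_prop (disch := first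
    | exact fun θ hθ => (ha θ hθ _).ne'
    | exact fun θ hθ => (hT θ hθ _).ne'
    | exact fun θ hθ => (hσ θ hθ _).ne')

end SinkhornMap

section KernelRatio

variable {ι κ : Type*} [Fintype ι] [Fintype κ] [Nonempty ι] [Nonempty κ]

def kernelRatio (K : ι → κ → ℝ) : ℝ :=
  (univ.inf' univ_nonempty fun q : ι × κ => K q.1 q.2) /
    univ.sup' univ_nonempty fun q : ι × κ => K q.1 q.2

variable {K : ι → κ → ℝ}

theorem kernelRatio_pos (hK : ∀ i j, 0 < K i j) : 0 < kernelRatio K :=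
  div_pos ((lt_inf'_iff _).2 fun q _ => hK q.1 q.2)
    ((lt_sup'_iff _).2 ⟨(Classical.arbitrary ι, Classical.arbitrary κ), mem_univ _, hK _ _⟩)

theorem kernelRatio_mul_le (hK : ∀ i j, 0 < K i j) (i i' : ι) (j j' : κ) :
    kernelRatio K * K i' j' ≤ K i j := by
  have hmax : 0 < univ.sup' univ_nonempty fun q : ι × κ => K q.1 q.2 :=
    (lt_sup'_iff _).2 ⟨(i, j), mem_univ _, hK i j⟩
  rw [kernelRatio, div_mul_eq_mul_div, div_le_iff₀ hmax]
  exact mul_le_mul (inf'_le _ (mem_univ (i, j))) (le_sup' (fun q : ι × κ => K q.1 q.2)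
    (mem_univ (i', j'))) (hK i' j').le (hK i j).le

theorem kernelRatio_le_one (hK : ∀ i j, 0 < K i j) : kernelRatio K ≤ 1 := by
  obtain ⟨i, j⟩ : Nonempty (ι × κ) := inferInstance
  have := kernelRatio_mul_le hK i i j j
  exact le_of_mul_le_mul_right (by simpa using this) (hK i j)

theorem ContinuousOn.kernelRatio {X : Type*} [TopologicalSpace X] {K : X → ι → κ → ℝ}
    {s : Set X} (hKc : ContinuousOn K s) (hK : ∀ θ ∈ s, ∀ i j, 0 < K θ i j) :
    ContinuousOn (fun θ => _root_.kernelRatio (K θ)) s := by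
  have hentry : ∀ q : ι × κ, ContinuousOn (fun θ => K θ q.1 q.2) s := fun q => by fun_prop
  refine (ContinuousOn.finset_inf'_apply _ fun q _ => hentry q).div
    (ContinuousOn.finset_sup'_apply _ fun q _ => hentry q) fun θ hθ => ?_
  exact ((lt_sup'_iff _).2
    ⟨(Classical.arbitrary ι, Classical.arbitrary κ), mem_univ _, hK θ hθ _ _⟩).ne'

end KernelRatio

section Convergence

variable {ι κ : Type*} [Fintype ι] [Fintype κ] [Nonempty ι] [Nonempty κ]
  {K : ι → κ → ℝ} {a : ι → ℝ} {b : κ → ℝ} {η : ℝ}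

theorem osc_iterate_sub_le (hK : ∀ i j, 0 < K i j) (hb : ∀ j, 0 < b j) (hη0 : 0 ≤ η)
    (hη1 : η ≤ 1) (hηK : ∀ i i' j, η * K i' j ≤ K i j) {x : ℕ → ι → ℝ}
    (hx : ∀ k, x (k + 1) = sinkhornMap K a b (x k)) {D : ℝ} (hD : osc (x 1 - x 0) ≤ D) (k : ℕ) :
    osc (x (k + 1) - x k) ≤ D * contractionRate η D ^ k := by
  have hD0 : 0 ≤ D := (osc_nonneg _).trans hD
  obtain ⟨hρ0, hρ1⟩ := contractionRate_mem_Icc hη0 hη1 hD0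
  induction k with
  | zero => simpa using hD
  | succ k ih =>
    have := osc_sinkhornMap_sub_le (a := a) hK hb hη0 hη1 hηK ih
      (mul_le_of_le_one_right hD0 (pow_le_one₀ hρ0 hρ1))
    rw [← hx, ← hx] at this
    calc _ ≤ _ := this
      _ = _ := by ring

theorem exists_tendsto_center_of_osc_le_geometric {x : ℕ → ι → ℝ} {D ρ : ℝ} (hρ : ρ < 1)
    (hx : ∀ k, osc (x (k + 1) - x k) ≤ D * ρ ^ k) :
    ∃ z, Tendsto (fun k => center (x k)) atTop (𝓝 z) ∧
      ∀ k, ‖center (x k) - z‖ ≤ D * ρ ^ k / (1 - ρ) := by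
  have hstep : ∀ k, dist (center (x k)) (center (x (k + 1))) ≤ D * ρ ^ k := fun k => by
    rw [dist_comm, dist_eq_norm, ← map_sub]
    exact (norm_center_le_osc _).trans (hx k)
  obtain ⟨z, hz⟩ := cauchySeq_tendsto_of_complete (cauchySeq_of_le_geometric ρ D hρ hstep)
  refine ⟨z, hz, fun k => ?_⟩
  rw [← dist_eq_norm]
  exact dist_le_of_le_geometric_of_tendsto ρ D hρ hstep hz k

theorem center_sinkhornMap_center (hK : ∀ i j, 0 < K i j) (hb : ∀ j, 0 < b j) (v : ι → ℝ) :
    center (sinkhornMap K a b (center v)) = center (sinkhornMap K a b v) := by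
  conv_rhs => rw [← center_add_const_mean v, sinkhornMap_add_const hK hb, map_add, center_const,
    add_zero]

theorem sinkhornMap_eq_self_of_tendsto_center (hK : ∀ i j, 0 < K i j) (ha : ∀ i, 0 < a i)
    (hb : ∀ j, 0 < b j) (hab : ∑ i, a i = ∑ j, b j) {x : ℕ → ι → ℝ}
    (hx : ∀ k, x (k + 1) = sinkhornMap K a b (x k)) {z : ι → ℝ}
    (hz : Tendsto (fun k => center (x k)) atTop (𝓝 z)) :
    sinkhornMap K a b z = z ∧ center z = z := by
  have hG : Continuous fun v => center (sinkhornMap K a b v) :=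
    continuous_center.comp (continuousOn_univ.1 (ContinuousOn.sinkhornMap continuousOn_const
      continuousOn_const continuousOn_const continuousOn_id (fun _ _ => hK) (fun _ _ => ha)
      (fun _ _ => hb)))
  have hrec : ∀ k, center (x (k + 1)) = center (sinkhornMap K a b (center (x k))) := fun k => by
    rw [hx, center_sinkhornMap_center hK hb]
  have hGz : center (sinkhornMap K a b z) = z :=
    tendsto_nhds_unique ((hG.tendsto z).comp hz)
      (by simpa only [comp_def, ← hrec] using hz.comp (tendsto_add_atTop_nat 1))
  have hfix : sinkhornMap K a b z = z := by
    refine sinkhornMap_eq_self_of_eq_add_const hK ha hb hab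
      (t := (∑ i, sinkhornMap K a b z i) / Fintype.card ι) ?_
    conv_lhs => rw [← center_add_const_mean (sinkhornMap K a b z), hGz]
  exact ⟨hfix, by rwa [hfix] at hGz⟩

theorem exists_sinkhornMap_eq_self_norm_center_sub_le (hK : ∀ i j, 0 < K i j)
    (ha : ∀ i, 0 < a i) (hb : ∀ j, 0 < b j) (hab : ∑ i, a i = ∑ j, b j) (hη0 : 0 < η)
    (hη1 : η ≤ 1) (hηK : ∀ i i' j, η * K i' j ≤ K i j) {x : ℕ → ι → ℝ}
    (hx : ∀ k, x (k + 1) = sinkhornMap K a b (x k)) {D : ℝ}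
    (hD : osc (x 0) + osc (fun i => log (a i)) - log η < D) :
    ∃ xbar, sinkhornMap K a b xbar = xbar ∧
      ∀ k, ‖center (x k) - center xbar‖ ≤ D / (1 - contractionRate η D) * contractionRate η D ^ k := by
  have hD0 : 0 < D := by
    linarith [osc_nonneg (x 0), osc_nonneg fun i => log (a i), log_nonpos hη0.le hη1]
  have hstart : osc (x 1 - x 0) ≤ D := by
    rw [hx 0]
    linarith [osc_sub_le (sinkhornMap K a b (x 0)) (x 0),
      osc_sinkhornMap_le (a := a) hK hb hη0 hηK (x 0)]
  obtain ⟨z, hz, hbound⟩ := exists_tendsto_center_of_osc_le_geometric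
    (contractionRate_mem_Ioo hη0 hη1 hD0).2 (osc_iterate_sub_le hK hb hη0.le hη1 hηK hx hstart)
  obtain ⟨hfix, hcz⟩ := sinkhornMap_eq_self_of_tendsto_center hK ha hb hab hx hz
  refine ⟨z, hfix, fun k => ?_⟩
  rw [hcz, div_mul_eq_mul_div]
  exact hbound k

end Convergence

section Parametric

variable {ι κ : Type*} [Fintype ι] [Fintype κ] [Nonempty ι] [Nonempty κ]

-- The `+ 1` keeps the bound positive, so that the rate and the constant of the estimate stay
-- in range even for a constant kernel.
def sinkhornBound (K : ι → κ → ℝ) (a x₀ : ι → ℝ) : ℝ :=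
  osc x₀ + osc (fun i => log (a i)) - log (kernelRatio K) + 1

theorem sinkhornBound_pos {K : ι → κ → ℝ} (hK : ∀ i j, 0 < K i j) (a x₀ : ι → ℝ) :
    0 < sinkhornBound K a x₀ := by
  have := log_nonpos (kernelRatio_pos hK).le (kernelRatio_le_one hK)
  unfold sinkhornBound
  linarith [osc_nonneg x₀, osc_nonneg fun i => log (a i)]

variable {X : Type*} [TopologicalSpace X] {K : X → ι → κ → ℝ} {a : X → ι → ℝ}
  {b : X → κ → ℝ} {s : Set X}

theorem ContinuousOn.sinkhornBound {x₀ : X → ι → ℝ} (hKc : ContinuousOn K s)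
    (hac : ContinuousOn a s) (hx₀ : ContinuousOn x₀ s) (hK : ∀ θ ∈ s, ∀ i j, 0 < K θ i j)
    (ha : ∀ θ ∈ s, ∀ i, 0 < a θ i) :
    ContinuousOn (fun θ => _root_.sinkhornBound (K θ) (a θ) (x₀ θ)) s := by
  have hloga : ContinuousOn (fun θ i => Real.log (a θ i)) s := by
    fun_prop (disch := exact fun θ hθ => (ha θ hθ _).ne')
  exact (((continuous_osc.comp_continuousOn hx₀).add (continuous_osc.comp_continuousOn hloga)).sub
    ((hKc.kernelRatio hK).log fun θ hθ => (kernelRatio_pos (hK θ hθ)).ne')).add continuousOn_const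

theorem exists_continuousOn_sinkhornMap_eq_self_norm_center_sub_le (hKc : ContinuousOn K s)
    (hac : ContinuousOn a s) (hbc : ContinuousOn b s) {x : ℕ → X → ι → ℝ}
    (hx₀ : ContinuousOn (x 0) s) (hK : ∀ θ ∈ s, ∀ i j, 0 < K θ i j)
    (ha : ∀ θ ∈ s, ∀ i, 0 < a θ i) (hb : ∀ θ ∈ s, ∀ j, 0 < b θ j)
    (hab : ∀ θ ∈ s, ∑ i, a θ i = ∑ j, b θ j)
    (hx : ∀ k, ∀ θ ∈ s, x (k + 1) θ = sinkhornMap (K θ) (a θ) (b θ) (x k θ)) :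
    ∃ xbar : X → ι → ℝ, (∀ θ ∈ s, sinkhornMap (K θ) (a θ) (b θ) (xbar θ) = xbar θ) ∧
      ContinuousOn (fun θ => center (xbar θ)) s ∧
      ∃ c ρ : X → ℝ, ContinuousOn c s ∧ ContinuousOn ρ s ∧ (∀ θ ∈ s, 0 < c θ) ∧
        (∀ θ ∈ s, ρ θ ∈ Set.Ioo (0 : ℝ) 1) ∧
        ∀ k, ∀ θ ∈ s, ‖center (x k θ) - center (xbar θ)‖ ≤ c θ * ρ θ ^ k := by
  set D := fun θ => sinkhornBound (K θ) (a θ) (x 0 θ)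
  set ρ := fun θ => contractionRate (kernelRatio (K θ)) (D θ)
  have hρ : ∀ θ ∈ s, ρ θ ∈ Set.Ioo 0 1 := fun θ hθ => contractionRate_mem_Ioo
    (kernelRatio_pos (hK θ hθ)) (kernelRatio_le_one (hK θ hθ)) (sinkhornBound_pos (hK θ hθ) _ _)
  have hlim : ∀ θ ∈ s, ∃ xb, sinkhornMap (K θ) (a θ) (b θ) xb = xb ∧
      ∀ k, ‖center (x k θ) - center xb‖ ≤ D θ / (1 - ρ θ) * ρ θ ^ k := fun θ hθ =>
    exists_sinkhornMap_eq_self_norm_center_sub_le (hK θ hθ) (ha θ hθ) (hb θ hθ) (hab θ hθ)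
      (kernelRatio_pos (hK θ hθ)) (kernelRatio_le_one (hK θ hθ))
      (fun i i' j => kernelRatio_mul_le (hK θ hθ) i i' j j) (fun k => hx k θ hθ) (lt_add_one _)
  choose! xbar hxbar using hlim
  have hDc : ContinuousOn D s := hKc.sinkhornBound hac hx₀ hK ha
  have hρc : ContinuousOn ρ s := by
    have := hKc.kernelRatio hK
    unfold ρ contractionRate
    fun_prop
  have hcc : ContinuousOn (fun θ => D θ / (1 - ρ θ)) s :=
    hDc.div (continuousOn_const.sub hρc) fun θ hθ => (sub_pos.2 (hρ θ hθ).2).ne'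
  have hxc : ∀ k, ContinuousOn (x k) s := fun k => by
    induction k with
    | zero => exact hx₀
    | succ k ih => exact (hKc.sinkhornMap hac hbc ih hK ha hb).congr (hx k)
  refine ⟨xbar, fun θ hθ => (hxbar θ hθ).1, ?_, _, ρ, hcc, hρc,
    fun θ hθ => div_pos (sinkhornBound_pos (hK θ hθ) _ _) (sub_pos.2 (hρ θ hθ).2), hρ,
    fun k θ hθ => (hxbar θ hθ).2 k⟩
  exact continuousOn_of_norm_sub_le_geometric
    (fun k => continuous_center.comp_continuousOn (hxc k)) hcc hρc (fun θ hθ => (hρ θ hθ).1.le)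
    (fun θ hθ => (hρ θ hθ).2) fun k θ hθ => (hxbar θ hθ).2 k

end Parametric

end

theorem sinkhorn_centered_iterates_linear_convergence_general
    (n m p : ℕ) (hn : 0 < n) (hm : 0 < m)
    (Ω : Set (Fin p → ℝ))
    (C : (Fin p → ℝ) → Fin n → Fin m → ℝ)
    (a : (Fin p → ℝ) → Fin n → ℝ) (b : (Fin p → ℝ) → Fin m → ℝ)
    (ε : (Fin p → ℝ) → ℝ) (x₀ : (Fin p → ℝ) → Fin n → ℝ)
    (hC : ContDiffOn ℝ 2 C Ω) (ha : ContDiffOn ℝ 2 a Ω)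
    (hb : ContDiffOn ℝ 2 b Ω) (hε : ContDiffOn ℝ 2 ε Ω)
    (hx₀ : ContDiffOn ℝ 2 x₀ Ω)
    (ha_pos : ∀ θ ∈ Ω, ∀ i, 0 < a θ i) (ha_sum : ∀ θ ∈ Ω, ∑ i, a θ i = 1)
    (hb_pos : ∀ θ ∈ Ω, ∀ j, 0 < b θ j) (hb_sum : ∀ θ ∈ Ω, ∑ j, b θ j = 1)
    (hε_pos : ∀ θ ∈ Ω, 0 < ε θ)
    (K : (Fin p → ℝ) → Fin n → Fin m → ℝ)
    (hK : ∀ θ i j, K θ i j = Real.exp (-(C θ i j) / ε θ))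
    (F : (Fin n → ℝ) → (Fin p → ℝ) → Fin n → ℝ)
    (hF : ∀ x θ i, F x θ i = Real.log (a θ i) -
      Real.log (∑ j, K θ i j * (b θ j / ∑ i', K θ i' j * Real.exp (x i'))))
    (x : ℕ → (Fin p → ℝ) → Fin n → ℝ)
    (hx_zero : ∀ θ ∈ Ω, x 0 θ = x₀ θ)
    (hx_rec : ∀ k, ∀ θ ∈ Ω, x (k + 1) θ = F (x k θ) θ)
    (Lc : (Fin n → ℝ) → Fin n → ℝ)
    (hLc : ∀ y i, Lc y i = y i - (∑ i', y i') / n) :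
    ∃ xbar : (Fin p → ℝ) → Fin n → ℝ,
      (∀ θ ∈ Ω, F (xbar θ) θ = xbar θ) ∧
      ContinuousOn (fun θ => Lc (xbar θ)) Ω ∧
      ∃ c ρ : (Fin p → ℝ) → ℝ,
        ContinuousOn c Ω ∧ ContinuousOn ρ Ω ∧
        (∀ θ ∈ Ω, 0 < c θ) ∧ (∀ θ ∈ Ω, ρ θ ∈ Set.Ioo (0 : ℝ) 1) ∧
        ∀ k : ℕ, ∀ θ ∈ Ω, ‖Lc (x k θ) - Lc (xbar θ)‖ ≤ c θ * ρ θ ^ k := by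
  have : Nonempty (Fin n) := ⟨⟨0, hn⟩⟩
  have : Nonempty (Fin m) := ⟨⟨0, hm⟩⟩
  obtain rfl : Lc = center := funext fun y => funext fun i => by simp [hLc, center_apply]
  obtain rfl : F = fun y θ => sinkhornMap (K θ) (a θ) (b θ) y :=
    funext₂ fun y θ => funext (hF y θ)
  have hKc : ContinuousOn K Ω := by
    rw [show K = fun θ i j => exp (-C θ i j / ε θ) from funext fun θ => funext₂ (hK θ)]
    have := hC.continuousOn
    have := hε.continuousOn
    fun_prop (disch := exact fun θ hθ => (hε_pos θ hθ).ne')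
  exact exists_continuousOn_sinkhornMap_eq_self_norm_center_sub_le hKc ha.continuousOn
    hb.continuousOn (hx₀.continuousOn.congr hx_zero) (fun θ _ i j => hK θ i j ▸ exp_pos _)
    ha_pos hb_pos (fun θ hθ => by rw [ha_sum θ hθ, hb_sum θ hθ]) hx_rec

/-- Local (locally uniform) linear convergence of the centered Sinkhorn iterates:
there is a fixed-point map `x̄` of `F(·, θ)` with `θ ↦ L_center (x̄ θ)` continuous,
and continuous `c : Ω → ℝ_{>0}`, `ρ : Ω → (0,1)` such that for all `k` and `θ ∈ Ω`,
`‖L_center (x_k θ) - L_center (x̄ θ)‖_∞ ≤ c θ * (ρ θ)^k`. -/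
theorem sinkhorn_centered_iterates_linear_convergence
    (n m p : ℕ) (hn : 0 < n) (hm : 0 < m) (hp : 0 < p)
    (Ω : Set (Fin p → ℝ)) (hΩ_open : IsOpen Ω) (hΩ_conn : IsConnected Ω)
    (C : (Fin p → ℝ) → Fin n → Fin m → ℝ)
    (a : (Fin p → ℝ) → Fin n → ℝ) (b : (Fin p → ℝ) → Fin m → ℝ)
    (ε : (Fin p → ℝ) → ℝ) (x₀ : (Fin p → ℝ) → Fin n → ℝ)
    (hC : ContDiffOn ℝ 2 C Ω) (ha : ContDiffOn ℝ 2 a Ω)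
    (hb : ContDiffOn ℝ 2 b Ω) (hε : ContDiffOn ℝ 2 ε Ω)
    (hx₀ : ContDiffOn ℝ 2 x₀ Ω)
    (ha_pos : ∀ θ ∈ Ω, ∀ i, 0 < a θ i) (ha_sum : ∀ θ ∈ Ω, ∑ i, a θ i = 1)
    (hb_pos : ∀ θ ∈ Ω, ∀ j, 0 < b θ j) (hb_sum : ∀ θ ∈ Ω, ∑ j, b θ j = 1)
    (hε_pos : ∀ θ ∈ Ω, 0 < ε θ)
    (K : (Fin p → ℝ) → Fin n → Fin m → ℝ)
    (hK : ∀ θ i j, K θ i j = Real.exp (-(C θ i j) / ε θ))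
    (F : (Fin n → ℝ) → (Fin p → ℝ) → Fin n → ℝ)
    (hF : ∀ x θ i, F x θ i = Real.log (a θ i) -
      Real.log (∑ j, K θ i j * (b θ j / ∑ i', K θ i' j * Real.exp (x i'))))
    (x : ℕ → (Fin p → ℝ) → Fin n → ℝ)
    (hx_zero : ∀ θ ∈ Ω, x 0 θ = x₀ θ)
    (hx_rec : ∀ k, ∀ θ ∈ Ω, x (k + 1) θ = F (x k θ) θ)
    (Lc : (Fin n → ℝ) → Fin n → ℝ)
    (hLc : ∀ y i, Lc y i = y i - (∑ i', y i') / n) :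
    ∃ xbar : (Fin p → ℝ) → Fin n → ℝ,
      (∀ θ ∈ Ω, F (xbar θ) θ = xbar θ) ∧
      ContinuousOn (fun θ => Lc (xbar θ)) Ω ∧
      ∃ c ρ : (Fin p → ℝ) → ℝ,
        ContinuousOn c Ω ∧ ContinuousOn ρ Ω ∧
        (∀ θ ∈ Ω, 0 < c θ) ∧ (∀ θ ∈ Ω, ρ θ ∈ Set.Ioo (0 : ℝ) 1) ∧
        ∀ k : ℕ, ∀ θ ∈ Ω, ‖Lc (x k θ) - Lc (xbar θ)‖ ≤ c θ * ρ θ ^ k :=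
  sinkhorn_centered_iterates_linear_convergence_general n m p hn hm Ω C a b ε x₀ hC ha hb hε hx₀
    ha_pos ha_sum hb_pos hb_sum hε_pos K hK F hF x hx_zero hx_rec Lc hLc
end

section
/- Under the parametrized Sinkhorn setup, let x̄(θ) ∈ ℝ^n be any fixed point of F(·, θ) (e.g. the limit of the Sinkhorn iterates), let A(θ) = (∂F/∂x)(x̄(θ), θ) ∈ ℝ^{n×n} and B(θ) = (∂F/∂θ)(x̄(θ), θ) ∈ ℝ^{n×p}. Then the matrix I − A(θ) + 1_n a(θ)^T is invertible, and the derivative of the unique entropic optimal transport plan P̂(θ) satisfies, for every direction h ∈ ℝ^p: (dP̂/dθ)(θ)[h] = (∂P/∂x)(x̄(θ), θ)[(I − A(θ) + 1_n a(θ)^T)^{-1} B(θ) h] + (∂P/∂θ)(x̄(θ), θ)[h], where (∂P/∂x)(x̄(θ), θ) : ℝ^n → ℝ^{n×m} and (∂P/∂θ)(x̄(θ), θ) : ℝ^p → ℝ^{n×m} are the partial Fréchet derivatives of P. -/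
/-!
The Sinkhorn map `F(·, θ)` commutes with adding constant vectors and `P` is invariant under that,
so the fixed points of `F(·, θ)` are not isolated and `I - ∂ₓF` is singular in the direction `1`.
At any `x`, `∂ₓF` is the transition matrix of the two-step walk `i → j → k` on the plan `P(x, θ)`:
a positive stochastic matrix whose stationary distribution is the row marginal of the plan, which
is `a` at a fixed point. Hence its only fixed vectors are constant, `aᵀ(I - ∂ₓF) = 0`, and the
rank-one correction `I - ∂ₓF + 1 aᵀ` is invertible. The implicit function theorem applied to
`x - F(x, θ) + 1 aᵀ x` gives a differentiable `ψ` with `F(ψ θ, θ) = ψ θ + μ(θ) 1`, and comparing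
total masses forces `μ = 0`. By a maximum principle, two scalings whose plans have the same row
sums differ by a constant, so `P̂ = P(ψ ·, ·)` near `θ₀`, and the formula is the chain rule.
-/

open Finset Real Filter Topology Matrix

theorem ContinuousLinearMap.isInvertible_of_injective {𝕜 E : Type*} [NontriviallyNormedField 𝕜]
    [CompleteSpace 𝕜] [NormedAddCommGroup E] [NormedSpace 𝕜 E] [FiniteDimensional 𝕜 E]
    {f : E →L[𝕜] E} (hf : Function.Injective f) : f.IsInvertible :=
  ⟨(LinearEquiv.ofInjectiveEndo (f : E →ₗ[𝕜] E) hf).toContinuousLinearEquiv, rfl⟩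

/-- Continuation of a fixed point of `Φ (θ₀, ·)` whose linearization `I - ∂ₓΦ` is singular but
becomes invertible after adding `S`: the implicit function theorem is applied to
`x - Φ (θ, x) + S x`. -/
theorem HasStrictFDerivAt.exists_fixedPoint_branch {𝕜 E X : Type*} [NontriviallyNormedField 𝕜]
    [NormedAddCommGroup E] [NormedSpace 𝕜 E] [CompleteSpace E]
    [NormedAddCommGroup X] [NormedSpace 𝕜 X] [CompleteSpace X]
    {Φ : E × X → X} {Φ' : E × X →L[𝕜] X} {θ₀ : E} {x₀ : X}
    (hΦ : HasStrictFDerivAt Φ Φ' (θ₀, x₀)) (hx₀ : Φ (θ₀, x₀) = x₀) (S : X →L[𝕜] X)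
    (hT : (.id 𝕜 X - Φ' ∘L .inr 𝕜 E X + S).IsInvertible) :
    ∃ ψ : E → X, ψ θ₀ = x₀ ∧
      HasFDerivAt ψ ((.id 𝕜 X - Φ' ∘L .inr 𝕜 E X + S).inverse ∘L (Φ' ∘L .inl 𝕜 E X)) θ₀ ∧
      ∀ᶠ θ in 𝓝 θ₀, Φ (θ, ψ θ) = ψ θ + S (ψ θ - x₀) := by
  have hg : HasStrictFDerivAt (fun q : E × X => q.2 - Φ q + S q.2)
      (.snd 𝕜 E X - Φ' + S ∘L .snd 𝕜 E X) (θ₀, x₀) :=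
    (hasStrictFDerivAt_snd.sub hΦ).add (S.hasStrictFDerivAt.comp _ hasStrictFDerivAt_snd)
  have hinr : (.snd 𝕜 E X - Φ' + S ∘L .snd 𝕜 E X) ∘L .inr 𝕜 E X
      = .id 𝕜 X - Φ' ∘L .inr 𝕜 E X + S := by ext; simp
  have hinl : (.snd 𝕜 E X - Φ' + S ∘L .snd 𝕜 E X) ∘L .inl 𝕜 E X = -(Φ' ∘L .inl 𝕜 E X) := by
    ext; simp
  rw [← hinr] at hT
  refine ⟨hg.implicitFunctionOfProdDomain hT,
    eq_of_tendsto_nhds (hg.tendsto_implicitFunctionOfProdDomain hT), ?_, ?_⟩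
  · simpa [hinr, hinl] using (hg.hasStrictFDerivAt_implicitFunctionOfProdDomain hT).hasFDerivAt
  · filter_upwards [hg.eventually_apply_implicitFunctionOfProdDomain hT] with θ hθ
    rw [hx₀, sub_self, zero_add] at hθ
    rw [map_sub, ← hθ]
    abel

theorem fderiv_comp_prodMk_apply {𝕜 E X Y : Type*} [NontriviallyNormedField 𝕜]
    [NormedAddCommGroup E] [NormedSpace 𝕜 E] [NormedAddCommGroup X] [NormedSpace 𝕜 X]
    [NormedAddCommGroup Y] [NormedSpace 𝕜 Y] {f : E × X → Y} {ψ : E → X} {θ₀ : E}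
    (hf : DifferentiableAt 𝕜 f (θ₀, ψ θ₀)) (hψ : DifferentiableAt 𝕜 ψ θ₀) (h : E) :
    fderiv 𝕜 (fun θ => f (θ, ψ θ)) θ₀ h =
      fderiv 𝕜 (fun x => f (θ₀, x)) (ψ θ₀) (fderiv 𝕜 ψ θ₀ h) +
        fderiv 𝕜 (fun θ => f (θ, ψ θ₀)) θ₀ h := by
  have htot : HasFDerivAt (fun θ => f (θ, ψ θ)) _ θ₀ :=
    hf.hasFDerivAt.comp θ₀ ((hasFDerivAt_id θ₀).prodMk hψ.hasFDerivAt)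
  have hx : HasFDerivAt (fun x => f (θ₀, x)) _ (ψ θ₀) :=
    hf.hasFDerivAt.comp (ψ θ₀) (hasFDerivAt_prodMk_right θ₀ (ψ θ₀))
  have hθ : HasFDerivAt (fun θ => f (θ, ψ θ₀)) _ θ₀ :=
    hf.hasFDerivAt.comp θ₀ (hasFDerivAt_prodMk_left θ₀ (ψ θ₀))
  rw [htot.fderiv, hx.fderiv, hθ.fderiv]
  simp [← map_add]

namespace Matrix

variable {ι κ : Type*} [Fintype ι] [Fintype κ]

theorem eq_of_mulVec_eq_self {M : Matrix ι ι ℝ} (hpos : ∀ i k, 0 < M i k)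
    (hrow : ∀ i, ∑ k, M i k = 1) {v : ι → ℝ} (hv : M *ᵥ v = v) (i k : ι) : v i = v k := by
  have : Nonempty ι := ⟨i⟩
  obtain ⟨i₀, hi₀⟩ := Finite.exists_max v
  suffices h : ∀ k, v k = v i₀ by rw [h i, h k]
  by_contra! ⟨k, hk⟩
  have : v i₀ < v i₀ := calc
    v i₀ = ∑ k, M i₀ k * v k := (congrFun hv i₀).symm
    _ < ∑ k, M i₀ k * v i₀ :=
      sum_lt_sum (fun k _ => mul_le_mul_of_nonneg_left (hi₀ k) (hpos i₀ k).le)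
        ⟨k, mem_univ k, mul_lt_mul_of_pos_left ((hi₀ k).lt_of_ne hk) (hpos i₀ k)⟩
    _ = v i₀ := by rw [← sum_mul, hrow, one_mul]
  exact this.false

/-- The matrix `1 rᵀ`. -/
noncomputable def oneVecMulCLM (r : ι → ℝ) : (ι → ℝ) →L[ℝ] (ι → ℝ) :=
  (∑ i, r i • ContinuousLinearMap.proj i).smulRight fun _ => 1

theorem oneVecMulCLM_apply (r v : ι → ℝ) : oneVecMulCLM r v = (∑ i, r i * v i) • fun _ => 1 := by
  simp [oneVecMulCLM]

theorem isInvertible_id_sub_add_oneVecMulCLM {M : Matrix ι ι ℝ} (hpos : ∀ i k, 0 < M i k)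
    (hrow : ∀ i, ∑ k, M i k = 1) {r : ι → ℝ} (hr : r ᵥ* M = r) (hsum : ∑ i, r i ≠ 0)
    {A : (ι → ℝ) →L[ℝ] (ι → ℝ)} (hA : ∀ v, A v = M *ᵥ v) :
    (.id ℝ _ - A + oneVecMulCLM r).IsInvertible := by
  refine ContinuousLinearMap.isInvertible_of_injective
    ((injective_iff_map_eq_zero _).2 fun v hv => ?_)
  replace hv : v - M *ᵥ v + (r ⬝ᵥ v) • (1 : ι → ℝ) = 0 := by
    rw [_root_.add_apply, _root_.sub_apply, ContinuousLinearMap.id_apply, hA,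
      oneVecMulCLM_apply] at hv
    exact hv
  have hrv : r ⬝ᵥ v = 0 := by
    simpa [dotProduct_mulVec, hr, dotProduct_one, hsum] using congrArg (r ⬝ᵥ ·) hv
  have hMv : M *ᵥ v = v := by simpa [hrv, sub_eq_zero, eq_comm] using hv
  funext i
  have hconst : v = fun _ => v i := funext fun k => eq_of_mulVec_eq_self hpos hrow hMv k i
  rw [hconst] at hrv
  simpa [dotProduct, ← sum_mul, hsum] using hrv

/-- The transition matrix of the walk that moves from row `i` to column `j` with probability
`Q i j / ∑ⱼ' Q i j'`, and back to row `k` with probability `Q k j / ∑ᵢ' Q i' j`. -/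
noncomputable def couplingTransition (Q : Matrix ι κ ℝ) : Matrix ι ι ℝ :=
  of fun i k => ∑ j, Q i j * Q k j / ((∑ j', Q i j') * ∑ i', Q i' j)

variable {Q : Matrix ι κ ℝ}

theorem couplingTransition_pos [Nonempty κ] (hQ : ∀ i j, 0 < Q i j) (i k : ι) :
    0 < couplingTransition Q i k := by
  have : Nonempty ι := ⟨i⟩
  exact sum_pos (fun j _ => div_pos (mul_pos (hQ i j) (hQ k j))
    (mul_pos (sum_pos (fun j' _ => hQ i j') univ_nonempty)
      (sum_pos (fun i' _ => hQ i' j) univ_nonempty))) univ_nonempty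

theorem sum_couplingTransition [Nonempty κ] (hQ : ∀ i j, 0 < Q i j) (i : ι) :
    ∑ k, couplingTransition Q i k = 1 := by
  have : Nonempty ι := ⟨i⟩
  have hr : (∑ j, Q i j) ≠ 0 := (sum_pos (fun j _ => hQ i j) univ_nonempty).ne'
  have hc : ∀ j, (∑ i', Q i' j) ≠ 0 := fun j => (sum_pos (fun i' _ => hQ i' j) univ_nonempty).ne'
  simp only [couplingTransition, of_apply]
  rw [sum_comm, ← div_self hr, sum_div]
  refine sum_congr rfl fun j _ => ?_
  rw [← sum_div, ← mul_sum]
  field_simp [hc j]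

theorem vecMul_couplingTransition [Nonempty κ] (hQ : ∀ i j, 0 < Q i j) :
    (fun i => ∑ j, Q i j) ᵥ* couplingTransition Q = fun i => ∑ j, Q i j := by
  have hr : ∀ i, (∑ j, Q i j) ≠ 0 := fun i => (sum_pos (fun j _ => hQ i j) univ_nonempty).ne'
  funext k
  have : Nonempty ι := ⟨k⟩
  have hc : ∀ j, (∑ i', Q i' j) ≠ 0 := fun j => (sum_pos (fun i' _ => hQ i' j) univ_nonempty).ne'
  simp only [vecMul, dotProduct, couplingTransition, of_apply]
  calc ∑ i, (∑ j', Q i j') * ∑ j, Q i j * Q k j / ((∑ j', Q i j') * ∑ i', Q i' j)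
      = ∑ i, ∑ j, Q i j * (Q k j / ∑ i', Q i' j) := by
        refine sum_congr rfl fun i _ => ?_
        rw [mul_sum]
        exact sum_congr rfl fun j _ => by field_simp [hr i]
    _ = ∑ j, Q k j := by
        rw [sum_comm]
        exact sum_congr rfl fun j _ => by rw [← sum_mul]; field_simp [hc j]

end Matrix

namespace Sinkhorn

variable {ι κ : Type*} [Fintype ι]

noncomputable def colSum (K : ι → κ → ℝ) (y : ι → ℝ) (j : κ) : ℝ := ∑ i, K i j * exp (y i)

noncomputable def step [Fintype κ] (a : ι → ℝ) (K : ι → κ → ℝ) (b : κ → ℝ) (y : ι → ℝ)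
    (i : ι) : ℝ :=
  log (a i) - log (∑ j, K i j * (b j / colSum K y j))

noncomputable def plan (K : ι → κ → ℝ) (b : κ → ℝ) (y : ι → ℝ) (i : ι) (j : κ) : ℝ :=
  exp (y i) * K i j * (b j / colSum K y j)

structure Admissible [Fintype κ] (a : ι → ℝ) (K : ι → κ → ℝ) (b : κ → ℝ) : Prop where
  a_pos : ∀ i, 0 < a i
  K_pos : ∀ i j, 0 < K i j
  b_pos : ∀ j, 0 < b j
  sum_eq : ∑ i, a i = ∑ j, b j

variable {a : ι → ℝ} {K : ι → κ → ℝ} {b : κ → ℝ}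

theorem colSum_pos [Nonempty ι] (hK : ∀ i j, 0 < K i j) (y : ι → ℝ) (j : κ) :
    0 < colSum K y j :=
  sum_pos (fun i _ => mul_pos (hK i j) (exp_pos _)) univ_nonempty

theorem plan_pos (hK : ∀ i j, 0 < K i j) (hb : ∀ j, 0 < b j) (y : ι → ℝ) (i : ι) (j : κ) :
    0 < plan K b y i j :=
  have : Nonempty ι := ⟨i⟩
  mul_pos (mul_pos (exp_pos _) (hK i j)) (div_pos (hb j) (colSum_pos hK y j))

theorem sum_plan_row [Fintype κ] (y : ι → ℝ) (i : ι) :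
    ∑ j, plan K b y i j = exp (y i) * ∑ j, K i j * (b j / colSum K y j) := by
  simp only [plan, mul_sum, mul_assoc]

theorem sum_plan_col [Nonempty ι] (hK : ∀ i j, 0 < K i j) (y : ι → ℝ) (j : κ) :
    ∑ i, plan K b y i j = b j := by
  have hs : ∑ i, exp (y i) * K i j = colSum K y j := sum_congr rfl fun i _ => mul_comm _ _
  simp only [plan, ← sum_mul, hs]
  field_simp [(colSum_pos hK y j).ne']

theorem plan_add_const (y : ι → ℝ) (c : ℝ) : plan K b (fun i => y i + c) = plan K b y := by
  have hs : ∀ j, colSum K (fun i => y i + c) j = exp c * colSum K y j := fun j => by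
    simp only [colSum, exp_add, mul_sum]; exact sum_congr rfl fun i _ => by ring
  funext i j
  simp only [plan, hs, exp_add]
  field_simp

theorem colSum_lt_colSum (hK : ∀ i j, 0 < K i j) {y z : ι → ℝ} (hle : y ≤ z) (hne : y ≠ z)
    (j : κ) : colSum K y j < colSum K z j := by
  obtain ⟨k, hk⟩ := Function.ne_iff.1 hne
  exact sum_lt_sum (fun k _ => mul_le_mul_of_nonneg_left (exp_le_exp.2 (hle k)) (hK k j).le)
    ⟨k, mem_univ k, mul_lt_mul_of_pos_left (exp_lt_exp.2 ((hle k).lt_of_ne hk)) (hK k j)⟩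

theorem sum_plan_lt_sum_plan [Fintype κ] [Nonempty κ] (hK : ∀ i j, 0 < K i j)
    (hb : ∀ j, 0 < b j) {y z : ι → ℝ} (hle : y ≤ z) (hne : y ≠ z) {i : ι} (hi : y i = z i) :
    ∑ j, plan K b z i j < ∑ j, plan K b y i j :=
  have : Nonempty ι := ⟨i⟩
  sum_lt_sum_of_nonempty univ_nonempty fun j _ => by
    rw [plan, plan, hi]
    exact mul_lt_mul_of_pos_left (div_lt_div_of_pos_left (hb j) (colSum_pos hK y j)
      (colSum_lt_colSum hK hle hne j)) (mul_pos (exp_pos _) (hK i j))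

theorem plan_eq_of_sum_plan_eq [Fintype κ] [Nonempty κ] (hK : ∀ i j, 0 < K i j)
    (hb : ∀ j, 0 < b j) {y y' : ι → ℝ}
    (h : ∀ i, ∑ j, plan K b y i j = ∑ j, plan K b y' i j) : plan K b y = plan K b y' := by
  obtain hι | hι := isEmpty_or_nonempty ι
  · funext i
    exact isEmptyElim i
  obtain ⟨i₀, hi₀⟩ := Finite.exists_max fun k => y' k - y k
  have hy' : y' = fun k => y k + (y' i₀ - y i₀) := by
    by_contra hne
    have := sum_plan_lt_sum_plan hK hb (fun k => by linarith [hi₀ k]) hne (by ring)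
    rw [plan_add_const, h i₀] at this
    exact this.false
  rw [hy', plan_add_const]

theorem sum_plan_eq_of_step_eq_add [Fintype κ] [Nonempty κ] (h : Admissible a K b) {y : ι → ℝ}
    {μ : ℝ} (hy : ∀ i, step a K b y i = y i + μ) (i : ι) : ∑ j, plan K b y i j = a i := by
  have : Nonempty ι := ⟨i⟩
  have ha_eq : ∀ i, a i = exp μ * ∑ j, plan K b y i j := fun i => by
    have hΦ : 0 < ∑ j, K i j * (b j / colSum K y j) := sum_pos (fun j _ =>
      mul_pos (h.K_pos i j) (div_pos (h.b_pos j) (colSum_pos h.K_pos y j))) univ_nonempty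
    have hlog : log (a i) = y i + μ + log (∑ j, K i j * (b j / colSum K y j)) := by
      have := hy i
      rw [step] at this
      linarith
    rw [sum_plan_row, ← exp_log (h.a_pos i), hlog, exp_add, exp_add, exp_log hΦ]
    ring
  have hμ : exp μ = 1 := by
    have hsum : ∑ i, a i = exp μ * ∑ i, a i := by
      conv_lhs => rw [sum_congr rfl fun i _ => ha_eq i, ← mul_sum, sum_comm]
      simp only [sum_plan_col h.K_pos, h.sum_eq]
    have : 0 < ∑ i, a i := sum_pos (fun i _ => h.a_pos i) univ_nonempty
    field_simp at hsum
    linarith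
  rw [ha_eq i, hμ, one_mul]

theorem hasDerivAt_step_line [Fintype κ] [Nonempty κ] (hK : ∀ i j, 0 < K i j) (hb : ∀ j, 0 < b j)
    (y v : ι → ℝ) (i : ι) :
    HasDerivAt (fun t : ℝ => step a K b (y + t • v) i)
      ((couplingTransition (plan K b y) *ᵥ v) i) 0 := by
  have : Nonempty ι := ⟨i⟩
  have hs : ∀ j, HasDerivAt (fun t : ℝ => colSum K (y + t • v) j)
      (∑ k, K k j * (exp (y k) * v k)) 0 := fun j => by
    refine HasDerivAt.fun_sum fun k _ => HasDerivAt.const_mul _ ?_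
    simpa using (((hasDerivAt_id (0 : ℝ)).mul_const (v k)).const_add (y k)).exp
  have hs0 : colSum K (y + (0 : ℝ) • v) = colSum K y := by simp
  have hΦ := HasDerivAt.fun_sum (u := univ) fun j _ =>
    ((hasDerivAt_const (0 : ℝ) (b j)).fun_div (hs j)
      (by rw [hs0]; exact (colSum_pos hK y j).ne')).const_mul (K i j)
  have hΦpos : 0 < ∑ j, K i j * (b j / colSum K y j) :=
    sum_pos (fun j _ => mul_pos (hK i j) (div_pos (hb j) (colSum_pos hK y j))) univ_nonempty
  refine ((hΦ.log (by simpa [hs0] using hΦpos.ne')).const_sub (log (a i))).congr_deriv ?_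
  simp only [hs0, mulVec, dotProduct, couplingTransition, of_apply, sum_plan_row,
    sum_plan_col hK, sum_mul]
  rw [sum_div, ← sum_neg_distrib, sum_comm]
  refine sum_congr rfl fun j _ => ?_
  have hsj := colSum_pos hK y j
  have hbj := hb j
  have hterm : ∀ k, plan K b y i j * plan K b y k j /
      ((exp (y i) * ∑ j, K i j * (b j / colSum K y j)) * b j) * v k
      = K i j * b j / (colSum K y j ^ 2 * ∑ j, K i j * (b j / colSum K y j)) *
        (K k j * (exp (y k) * v k)) := fun k => by
    simp only [plan]
    field_simp
  rw [sum_congr rfl fun k _ => hterm k, ← mul_sum]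
  field_simp
  ring

theorem apply_eq_mulVec_of_hasFDerivAt_step [Fintype κ] [Nonempty κ] (hK : ∀ i j, 0 < K i j)
    (hb : ∀ j, 0 < b j) {y : ι → ℝ} {A : (ι → ℝ) →L[ℝ] (ι → ℝ)}
    (hA : HasFDerivAt (step a K b) A y) (v : ι → ℝ) :
    A v = couplingTransition (plan K b y) *ᵥ v := by
  have hline : HasDerivAt (fun t : ℝ => y + t • v) v 0 := by
    simpa using ((hasDerivAt_id (0 : ℝ)).smul_const v).const_add y
  have hA' : HasFDerivAt (step a K b) A (y + (0 : ℝ) • v) := by simpa using hA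
  funext i
  exact (hasDerivAt_pi.1 (hA'.comp_hasDerivAt 0 hline) i).unique (hasDerivAt_step_line hK hb y v i)

theorem isInvertible_id_sub_add_oneVecMulCLM_of_hasFDerivAt_step [Fintype κ] [Nonempty ι]
    [Nonempty κ] (h : Admissible a K b) {y : ι → ℝ} (hy : step a K b y = y)
    {A : (ι → ℝ) →L[ℝ] (ι → ℝ)} (hA : HasFDerivAt (step a K b) A y) :
    (.id ℝ _ - A + oneVecMulCLM a).IsInvertible := by
  have hQ := plan_pos h.K_pos h.b_pos y
  have hr : (fun i => ∑ j, plan K b y i j) = a :=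
    funext (sum_plan_eq_of_step_eq_add h (μ := 0) (by simp [hy]))
  exact isInvertible_id_sub_add_oneVecMulCLM (couplingTransition_pos hQ)
    (sum_couplingTransition hQ) (hr ▸ vecMul_couplingTransition hQ)
    (sum_pos (fun i _ => h.a_pos i) univ_nonempty).ne'
    (apply_eq_mulVec_of_hasFDerivAt_step h.K_pos h.b_pos hA)

section Parametric

variable [Fintype κ] {E : Type*} [NormedAddCommGroup E] [NormedSpace ℝ E] {n : WithTop ℕ∞}
  {a : E → ι → ℝ} {K : E → ι → κ → ℝ} {b : E → κ → ℝ} {θ₀ : E}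

theorem contDiffAt_colSum (hK : ContDiffAt ℝ n K θ₀) (y₀ : ι → ℝ) (j : κ) :
    ContDiffAt ℝ n (fun q : E × (ι → ℝ) => colSum (K q.1) q.2 j) (θ₀, y₀) :=
  ContDiffAt.sum fun i _ =>
    (contDiffAt_pi.1 (contDiffAt_pi.1 hK i) j).fst'.mul (contDiffAt_pi.1 contDiffAt_snd i).exp

theorem contDiffAt_div_colSum [Nonempty ι] (hK : ContDiffAt ℝ n K θ₀) (hb : ContDiffAt ℝ n b θ₀)
    (hK_pos : ∀ i j, 0 < K θ₀ i j) (y₀ : ι → ℝ) (j : κ) :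
    ContDiffAt ℝ n (fun q : E × (ι → ℝ) => b q.1 j / colSum (K q.1) q.2 j) (θ₀, y₀) :=
  (contDiffAt_pi.1 hb j).fst'.div (contDiffAt_colSum hK y₀ j) (colSum_pos hK_pos y₀ j).ne'

theorem contDiffAt_plan [Nonempty ι] (hK : ContDiffAt ℝ n K θ₀) (hb : ContDiffAt ℝ n b θ₀)
    (hK_pos : ∀ i j, 0 < K θ₀ i j) (y₀ : ι → ℝ) :
    ContDiffAt ℝ n (fun q : E × (ι → ℝ) => plan (K q.1) (b q.1) q.2) (θ₀, y₀) :=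
  contDiffAt_pi.2 fun i => contDiffAt_pi.2 fun j =>
    ((contDiffAt_pi.1 contDiffAt_snd i).exp.mul (contDiffAt_pi.1 (contDiffAt_pi.1 hK i) j).fst').mul
      (contDiffAt_div_colSum hK hb hK_pos y₀ j)

theorem contDiffAt_step [Nonempty ι] [Nonempty κ] (ha : ContDiffAt ℝ n a θ₀)
    (hK : ContDiffAt ℝ n K θ₀) (hb : ContDiffAt ℝ n b θ₀) (ha_pos : ∀ i, 0 < a θ₀ i)
    (hK_pos : ∀ i j, 0 < K θ₀ i j) (hb_pos : ∀ j, 0 < b θ₀ j) (y₀ : ι → ℝ) :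
    ContDiffAt ℝ n (fun q : E × (ι → ℝ) => step (a q.1) (K q.1) (b q.1) q.2) (θ₀, y₀) :=
  contDiffAt_pi.2 fun i => ((contDiffAt_pi.1 ha i).fst'.log (ha_pos i).ne').sub
    ((ContDiffAt.sum fun j _ => (contDiffAt_pi.1 (contDiffAt_pi.1 hK i) j).fst'.mul
      (contDiffAt_div_colSum hK hb hK_pos y₀ j)).log
    (sum_pos (fun j _ => mul_pos (hK_pos i j) (div_pos (hb_pos j) (colSum_pos hK_pos y₀ j)))
      univ_nonempty).ne')

theorem contDiffAt_exp_neg_div {C : E → ι → κ → ℝ} {ε : E → ℝ} (hC : ContDiffAt ℝ n C θ₀)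
    (hε : ContDiffAt ℝ n ε θ₀) (hε₀ : ε θ₀ ≠ 0) :
    ContDiffAt ℝ n (fun θ i j => exp (-C θ i j / ε θ)) θ₀ :=
  contDiffAt_pi.2 fun i => contDiffAt_pi.2 fun j =>
    ((contDiffAt_pi.1 (contDiffAt_pi.1 hC i) j).neg.div hε hε₀).exp

theorem exists_plan_branch [CompleteSpace E] [Nonempty ι] [Nonempty κ]
    (ha : ContDiffAt ℝ 1 a θ₀) (hK : ContDiffAt ℝ 1 K θ₀) (hb : ContDiffAt ℝ 1 b θ₀)
    (hadm : ∀ᶠ θ in 𝓝 θ₀, Admissible (a θ) (K θ) (b θ)) {x₀ : ι → ℝ}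
    (hx₀ : step (a θ₀) (K θ₀) (b θ₀) x₀ = x₀) :
    (.id ℝ _ - fderiv ℝ (step (a θ₀) (K θ₀) (b θ₀)) x₀ + oneVecMulCLM (a θ₀)).IsInvertible ∧
    ∃ ψ : E → ι → ℝ, ψ θ₀ = x₀ ∧
      HasFDerivAt ψ ((.id ℝ _ - fderiv ℝ (step (a θ₀) (K θ₀) (b θ₀)) x₀ +
        oneVecMulCLM (a θ₀)).inverse ∘L fderiv ℝ (fun θ => step (a θ) (K θ) (b θ) x₀) θ₀) θ₀ ∧
      ∀ᶠ θ in 𝓝 θ₀, ∀ y, step (a θ) (K θ) (b θ) y = y →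
        plan (K θ) (b θ) y = plan (K θ) (b θ) (ψ θ) := by
  have h₀ := hadm.self_of_nhds
  have hΦ := (contDiffAt_step ha hK hb h₀.a_pos h₀.K_pos h₀.b_pos x₀).hasStrictFDerivAt one_ne_zero
  have hA : HasFDerivAt (step (a θ₀) (K θ₀) (b θ₀)) _ x₀ :=
    hΦ.hasFDerivAt.comp x₀ (hasFDerivAt_prodMk_right θ₀ x₀)
  have hB := hΦ.hasFDerivAt.comp θ₀ (hasFDerivAt_prodMk_left (𝕜 := ℝ) θ₀ x₀)
  have hT := isInvertible_id_sub_add_oneVecMulCLM_of_hasFDerivAt_step h₀ hx₀ hA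
  rw [hA.fderiv, show fderiv ℝ (fun θ => step (a θ) (K θ) (b θ) x₀) θ₀ = _ from hB.fderiv]
  obtain ⟨ψ, hψ₀, hψ', hψ⟩ := hΦ.exists_fixedPoint_branch hx₀ (oneVecMulCLM (a θ₀)) hT
  refine ⟨hT, ψ, hψ₀, hψ', ?_⟩
  filter_upwards [hψ, hadm] with θ hθ hθ_adm y hy
  refine plan_eq_of_sum_plan_eq hθ_adm.K_pos hθ_adm.b_pos fun i => ?_
  rw [sum_plan_eq_of_step_eq_add hθ_adm (μ := 0) (by simp [hy]),
    sum_plan_eq_of_step_eq_add hθ_adm (μ := ∑ k, a θ₀ k * (ψ θ k - x₀ k))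
      (fun i => by rw [hθ, Pi.add_apply, oneVecMulCLM_apply]; simp)]

end Parametric

end Sinkhorn

theorem entropic_ot_derivative_formula_general
    (n m p : ℕ)
    (Ω : Set (Fin p → ℝ)) (hΩ_open : IsOpen Ω)
    (C : (Fin p → ℝ) → Fin n → Fin m → ℝ)
    (a : (Fin p → ℝ) → Fin n → ℝ) (b : (Fin p → ℝ) → Fin m → ℝ)
    (ε : (Fin p → ℝ) → ℝ)
    (hC : ContDiffOn ℝ 2 C Ω) (ha : ContDiffOn ℝ 2 a Ω)
    (hb : ContDiffOn ℝ 2 b Ω) (hε : ContDiffOn ℝ 2 ε Ω)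
    (ha_pos : ∀ θ ∈ Ω, ∀ i, 0 < a θ i) (ha_sum : ∀ θ ∈ Ω, ∑ i, a θ i = 1)
    (hb_pos : ∀ θ ∈ Ω, ∀ j, 0 < b θ j) (hb_sum : ∀ θ ∈ Ω, ∑ j, b θ j = 1)
    (hε_pos : ∀ θ ∈ Ω, 0 < ε θ)
    (K : (Fin p → ℝ) → Fin n → Fin m → ℝ)
    (hK : ∀ θ i j, K θ i j = Real.exp (-(C θ i j) / ε θ))
    (F : (Fin n → ℝ) → (Fin p → ℝ) → Fin n → ℝ)
    (hF : ∀ y θ i, F y θ i = Real.log (a θ i) -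
      Real.log (∑ j, K θ i j * (b θ j / ∑ i', K θ i' j * Real.exp (y i'))))
    (P : (Fin n → ℝ) → (Fin p → ℝ) → Fin n → Fin m → ℝ)
    (hP : ∀ y θ i j, P y θ i j =
      Real.exp (y i) * K θ i j * (b θ j / ∑ i', K θ i' j * Real.exp (y i')))
    -- `x̄ θ` is any fixed point of `F (·, θ)`
    (xbar : (Fin p → ℝ) → Fin n → ℝ)
    (hxbar : ∀ θ ∈ Ω, F (xbar θ) θ = xbar θ)
    (L : (Fin p → ℝ) → (Fin n → Fin m → ℝ) → ℝ)
    (Phat : (Fin p → ℝ) → Fin n → Fin m → ℝ)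
    (hPhat_eq : ∀ θ ∈ Ω, Phat θ = P (xbar θ) θ) :
    ∀ θ ∈ Ω, ∃ R : (Fin n → ℝ) →L[ℝ] (Fin n → ℝ),
      -- `R` is a two-sided inverse of `y ↦ (I - A θ + 1ₙ a(θ)ᵀ) y`
      (∀ y : Fin n → ℝ,
        R (y - fderiv ℝ (fun z => F z θ) (xbar θ) y +
            (∑ i, a θ i * y i) • (fun _ => (1 : ℝ))) = y) ∧
      (∀ y : Fin n → ℝ,
        R y - fderiv ℝ (fun z => F z θ) (xbar θ) (R y) +
            (∑ i, a θ i * R y i) • (fun _ => (1 : ℝ)) = y) ∧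
      -- the derivative of the entropic optimal transport plan
      (∀ h : Fin p → ℝ,
        fderiv ℝ Phat θ h =
          fderiv ℝ (fun z => P z θ) (xbar θ)
              (R (fderiv ℝ (fun θ' => F (xbar θ) θ') θ h)) +
            fderiv ℝ (fun θ' => P (xbar θ) θ') θ h) := by
  intro θ₀ hθ₀
  have hΩ : Ω ∈ 𝓝 θ₀ := hΩ_open.mem_nhds hθ₀
  have : Nonempty (Fin n) :=
    univ_nonempty_iff.1 (nonempty_of_sum_ne_zero (f := a θ₀) (by simp [ha_sum θ₀ hθ₀]))
  have : Nonempty (Fin m) :=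
    univ_nonempty_iff.1 (nonempty_of_sum_ne_zero (f := b θ₀) (by simp [hb_sum θ₀ hθ₀]))
  obtain rfl : F = fun y θ => Sinkhorn.step (a θ) (K θ) (b θ) y := by funext y θ i; exact hF y θ i
  obtain rfl : P = fun y θ => Sinkhorn.plan (K θ) (b θ) y := by funext y θ i j; exact hP y θ i j
  have hK' : K = fun θ i j => exp (-C θ i j / ε θ) := by funext θ i j; exact hK θ i j
  have hadm : ∀ᶠ θ in 𝓝 θ₀, Sinkhorn.Admissible (a θ) (K θ) (b θ) := by
    filter_upwards [hΩ] with θ hθ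
    exact ⟨ha_pos θ hθ, fun i j => hK θ i j ▸ exp_pos _, hb_pos θ hθ,
      by rw [ha_sum θ hθ, hb_sum θ hθ]⟩
  have hKθ₀ : ContDiffAt ℝ 1 K θ₀ := hK' ▸ (Sinkhorn.contDiffAt_exp_neg_div (hC.contDiffAt hΩ)
    (hε.contDiffAt hΩ) (hε_pos θ₀ hθ₀).ne').of_le one_le_two
  have hbθ₀ : ContDiffAt ℝ 1 b θ₀ := (hb.contDiffAt hΩ).of_le one_le_two
  obtain ⟨hT, ψ, hψ₀, hψ', hψ⟩ := Sinkhorn.exists_plan_branch ((ha.contDiffAt hΩ).of_le one_le_two)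
    hKθ₀ hbθ₀ hadm (hxbar θ₀ hθ₀)
  have hPhat : Phat =ᶠ[𝓝 θ₀] fun θ => Sinkhorn.plan (K θ) (b θ) (ψ θ) := by
    filter_upwards [hψ, hΩ] with θ hθ hθΩ
    rw [hPhat_eq θ hθΩ]
    exact hθ _ (hxbar θ hθΩ)
  refine ⟨(.id ℝ _ - fderiv ℝ (Sinkhorn.step (a θ₀) (K θ₀) (b θ₀)) (xbar θ₀) +
      oneVecMulCLM (a θ₀)).inverse,
    fun y => ?_, fun y => ?_, fun h => ?_⟩
  · simpa [oneVecMulCLM_apply] using hT.inverse_apply_self y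
  · simpa [oneVecMulCLM_apply] using hT.self_apply_inverse y
  · have hplan := (Sinkhorn.contDiffAt_plan hKθ₀ hbθ₀ hadm.self_of_nhds.K_pos (ψ θ₀)
      ).differentiableAt one_ne_zero
    rw [hPhat.fderiv_eq, fderiv_comp_prodMk_apply hplan hψ'.differentiableAt, hψ'.fderiv, hψ₀]
    rfl

/-- Expression of the derivative of the entropic optimal transport plan: with
`A θ = ∂F/∂x (x̄ θ, θ)` and `B θ = ∂F/∂θ (x̄ θ, θ)`, the linear map
`I - A θ + 1ₙ a(θ)ᵀ` is invertible (with inverse `R`), and for every `h`,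
`dP̂/dθ (θ) h = ∂P/∂x (x̄ θ, θ) (R (B θ h)) + ∂P/∂θ (x̄ θ, θ) h`. -/
theorem entropic_ot_derivative_formula
    (n m p : ℕ) (hn : 0 < n) (hm : 0 < m) (hp : 0 < p)
    (Ω : Set (Fin p → ℝ)) (hΩ_open : IsOpen Ω) (hΩ_conn : IsConnected Ω)
    (C : (Fin p → ℝ) → Fin n → Fin m → ℝ)
    (a : (Fin p → ℝ) → Fin n → ℝ) (b : (Fin p → ℝ) → Fin m → ℝ)
    (ε : (Fin p → ℝ) → ℝ)
    (hC : ContDiffOn ℝ 2 C Ω) (ha : ContDiffOn ℝ 2 a Ω)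
    (hb : ContDiffOn ℝ 2 b Ω) (hε : ContDiffOn ℝ 2 ε Ω)
    (ha_pos : ∀ θ ∈ Ω, ∀ i, 0 < a θ i) (ha_sum : ∀ θ ∈ Ω, ∑ i, a θ i = 1)
    (hb_pos : ∀ θ ∈ Ω, ∀ j, 0 < b θ j) (hb_sum : ∀ θ ∈ Ω, ∑ j, b θ j = 1)
    (hε_pos : ∀ θ ∈ Ω, 0 < ε θ)
    (K : (Fin p → ℝ) → Fin n → Fin m → ℝ)
    (hK : ∀ θ i j, K θ i j = Real.exp (-(C θ i j) / ε θ))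
    (F : (Fin n → ℝ) → (Fin p → ℝ) → Fin n → ℝ)
    (hF : ∀ y θ i, F y θ i = Real.log (a θ i) -
      Real.log (∑ j, K θ i j * (b θ j / ∑ i', K θ i' j * Real.exp (y i'))))
    (P : (Fin n → ℝ) → (Fin p → ℝ) → Fin n → Fin m → ℝ)
    (hP : ∀ y θ i j, P y θ i j =
      Real.exp (y i) * K θ i j * (b θ j / ∑ i', K θ i' j * Real.exp (y i')))
    -- `x̄ θ` is any fixed point of `F (·, θ)`
    (xbar : (Fin p → ℝ) → Fin n → ℝ)
    (hxbar : ∀ θ ∈ Ω, F (xbar θ) θ = xbar θ)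
    -- the transportation polytope, the entropic objective, and the unique minimizer
    (U : (Fin p → ℝ) → Set (Fin n → Fin m → ℝ))
    (hU : ∀ θ, U θ = {Q : Fin n → Fin m → ℝ |
      (∀ i j, 0 ≤ Q i j) ∧ (∀ i, ∑ j, Q i j = a θ i) ∧ (∀ j, ∑ i, Q i j = b θ j)})
    (L : (Fin p → ℝ) → (Fin n → Fin m → ℝ) → ℝ)
    (hL : ∀ θ Q, L θ Q = (∑ i, ∑ j, Q i j * C θ i j) -
      ε θ * (-(∑ i, ∑ j, Q i j * (Real.log (Q i j) - 1))))
    (Phat : (Fin p → ℝ) → Fin n → Fin m → ℝ)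
    (hPhat : ∀ θ ∈ Ω, Phat θ ∈ U θ ∧
      ∀ Q ∈ U θ, Q ≠ Phat θ → L θ (Phat θ) < L θ Q)
    (hPhat_eq : ∀ θ ∈ Ω, Phat θ = P (xbar θ) θ) :
    ∀ θ ∈ Ω, ∃ R : (Fin n → ℝ) →L[ℝ] (Fin n → ℝ),
      -- `R` is a two-sided inverse of `y ↦ (I - A θ + 1ₙ a(θ)ᵀ) y`
      (∀ y : Fin n → ℝ,
        R (y - fderiv ℝ (fun z => F z θ) (xbar θ) y +
            (∑ i, a θ i * y i) • (fun _ => (1 : ℝ))) = y) ∧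
      (∀ y : Fin n → ℝ,
        R y - fderiv ℝ (fun z => F z θ) (xbar θ) (R y) +
            (∑ i, a θ i * R y i) • (fun _ => (1 : ℝ)) = y) ∧
      -- the derivative of the entropic optimal transport plan
      (∀ h : Fin p → ℝ,
        fderiv ℝ Phat θ h =
          fderiv ℝ (fun z => P z θ) (xbar θ)
              (R (fderiv ℝ (fun θ' => F (xbar θ) θ') θ h)) +
            fderiv ℝ (fun θ' => P (xbar θ) θ') θ h) :=
  entropic_ot_derivative_formula_general n m p Ω hΩ_open C a b ε hC ha hb hε ha_pos ha_sum hb_pos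
    hb_sum hε_pos K hK F hF P hP xbar hxbar L Phat hPhat_eq
end

section
/- For every x ∈ ℝ^n, the vector w(x) = (a ⊙ e^x) ⊘ e^{F(x)} ∈ ℝ^n (with ⊙ the entrywise product and ⊘ the entrywise division) satisfies ((dF/dx)(x))^T w(x) = w(x), i.e. w(x) is an eigenvector of the transpose of the Jacobian of F at x with eigenvalue 1. -/
/-!
Write `u = eˣ`, `S = Kᵀu` and `G = K (b ⊘ S)`, so that `F = log a - log G` and
`w = a ⊙ u ⊘ e^F = u ⊙ G`. Differentiating,
`J = diag(G)⁻¹ K diag(b ⊘ S²) Kᵀ diag(u)`, hence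
`Jᵀ w = diag(u) K diag(b ⊘ S²) Kᵀ u = diag(u) K diag(b ⊘ S²) S = u ⊙ K (b ⊘ S) = w`.
-/

open Finset Matrix Real

namespace Sinkhorn

noncomputable section

variable {ι κ : Type*} [Fintype ι] (K : Matrix ι κ ℝ) (b : κ → ℝ)

def kTransposeExp (x : ι → ℝ) (l : κ) : ℝ := ∑ i, K i l * exp (x i)

def kScaled [Fintype κ] (x : ι → ℝ) (j : ι) : ℝ := ∑ l, K j l * (b l / kTransposeExp K x l)

variable {K b}

theorem kTransposeExp_pos [Nonempty ι] (hK : ∀ i l, 0 < K i l) (x : ι → ℝ) (l : κ) :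
    0 < kTransposeExp K x l :=
  sum_pos (fun i _ => mul_pos (hK i l) (exp_pos _)) univ_nonempty

theorem kScaled_pos [Fintype κ] [Nonempty ι] [Nonempty κ] (hK : ∀ i l, 0 < K i l)
    (hb : ∀ l, 0 < b l) (x : ι → ℝ) (j : ι) : 0 < kScaled K b x j :=
  sum_pos (fun l _ => mul_pos (hK j l) (div_pos (hb l) (kTransposeExp_pos hK x l)))
    univ_nonempty

variable (K) in
theorem hasFDerivAt_kTransposeExp (x : ι → ℝ) (l : κ) :
    HasFDerivAt (kTransposeExp K · l)
      (∑ i, (K i l * exp (x i)) • (ContinuousLinearMap.proj i : (ι → ℝ) →L[ℝ] ℝ)) x :=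
  HasFDerivAt.fun_sum fun i _ => by
    simpa only [smul_smul] using ((hasFDerivAt_apply i x).exp.const_mul (K i l))

theorem hasFDerivAt_kScaled [Fintype κ] {x : ι → ℝ} (hS : ∀ l, kTransposeExp K x l ≠ 0)
    (j : ι) :
    HasFDerivAt (kScaled K b · j)
      (∑ l, (-(K j l * b l / kTransposeExp K x l ^ 2)) •
        ∑ i, (K i l * exp (x i)) • (ContinuousLinearMap.proj i : (ι → ℝ) →L[ℝ] ℝ)) x := by
  refine HasFDerivAt.fun_sum fun l _ => ?_
  have h := ((hasDerivAt_inv (hS l)).comp_hasFDerivAt x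
    (hasFDerivAt_kTransposeExp K x l)).const_mul (K j l * b l)
  rw [smul_smul] at h
  refine (h.congr_fderiv ?_).congr_of_eventuallyEq (.of_forall fun y => ?_)
  · congr 1
    ring
  · simp only [Function.comp_apply]
    ring

variable (K b) in
def sinkhornMap [Fintype κ] (a x : ι → ℝ) (j : ι) : ℝ := log (a j) - log (kScaled K b x j)

variable (K b) in
def jacobian [Fintype κ] (x : ι → ℝ) : Matrix ι ι ℝ :=
  of fun j i =>
    (kScaled K b x j)⁻¹ * ∑ l, K j l * b l / kTransposeExp K x l ^ 2 * (K i l * exp (x i))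

theorem hasFDerivAt_sinkhornMap [Fintype κ] {x : ι → ℝ} (hS : ∀ l, kTransposeExp K x l ≠ 0)
    (hG : ∀ j, kScaled K b x j ≠ 0) (a : ι → ℝ) :
    HasFDerivAt (sinkhornMap K b a) (ContinuousLinearMap.pi fun j =>
      -((kScaled K b x j)⁻¹ • ∑ l, (-(K j l * b l / kTransposeExp K x l ^ 2)) •
        ∑ i, (K i l * exp (x i)) • (ContinuousLinearMap.proj i : (ι → ℝ) →L[ℝ] ℝ))) x :=
  hasFDerivAt_pi.2 fun j => ((hasFDerivAt_kScaled hS j).log (hG j)).const_sub (log (a j))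

theorem fderiv_sinkhornMap_apply_single [Fintype κ] [DecidableEq ι] {x : ι → ℝ}
    (hS : ∀ l, kTransposeExp K x l ≠ 0) (hG : ∀ j, kScaled K b x j ≠ 0) (a : ι → ℝ) (i j : ι) :
    fderiv ℝ (sinkhornMap K b a) x (Pi.single i 1) j = jacobian K b x j i := by
  rw [(hasFDerivAt_sinkhornMap hS hG a).fderiv]
  simp [jacobian, Pi.single_apply, mul_sum]

theorem exp_sinkhornMap [Fintype κ] {a : ι → ℝ} {x : ι → ℝ} {j : ι} (ha : 0 < a j)
    (hG : 0 < kScaled K b x j) : exp (sinkhornMap K b a x j) = a j / kScaled K b x j := by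
  rw [sinkhornMap, exp_sub, exp_log ha, exp_log hG]

theorem transpose_jacobian_mulVec [Fintype κ] {x : ι → ℝ} (hS : ∀ l, kTransposeExp K x l ≠ 0)
    (hG : ∀ j, kScaled K b x j ≠ 0) :
    (jacobian K b x)ᵀ *ᵥ (fun j => exp (x j) * kScaled K b x j) =
      fun j => exp (x j) * kScaled K b x j := by
  ext i
  simp only [mulVec, dotProduct, transpose_apply, jacobian, of_apply]
  calc ∑ j, (kScaled K b x j)⁻¹ * (∑ l, K j l * b l / kTransposeExp K x l ^ 2 *
          (K i l * exp (x i))) * (exp (x j) * kScaled K b x j)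
      = ∑ j, ∑ l, K j l * exp (x j) * (b l / kTransposeExp K x l ^ 2 * K i l * exp (x i)) := by
        refine sum_congr rfl fun j _ => ?_
        rw [mul_comm, ← mul_assoc, mul_assoc _ _ (_)⁻¹, mul_inv_cancel₀ (hG j), mul_one, mul_sum]
        exact sum_congr rfl fun l _ => by ring
    _ = ∑ l, kTransposeExp K x l * (b l / kTransposeExp K x l ^ 2 * K i l * exp (x i)) := by
        rw [sum_comm]
        simp only [kTransposeExp, sum_mul]
    _ = exp (x i) * kScaled K b x i := by
        rw [kScaled, mul_sum]
        refine sum_congr rfl fun l _ => ?_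
        field_simp [hS l]

end

end Sinkhorn

open Sinkhorn

theorem left_eigenvector_of_sinkhorn_jacobian_general
    (n m : ℕ) (hn : 0 < n) (hm : 0 < m)
    (a : Fin n → ℝ) (b : Fin m → ℝ) (K : Matrix (Fin n) (Fin m) ℝ)
    (ha_pos : ∀ i, 0 < a i)
    (hb_pos : ∀ j, 0 < b j)
    (hK_pos : ∀ i j, 0 < K i j)
    (F : (Fin n → ℝ) → Fin n → ℝ)
    (hF : ∀ x i, F x i = Real.log (a i) -
      Real.log (∑ j, K i j * (b j / ∑ i', K i' j * Real.exp (x i'))))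
    (J : (Fin n → ℝ) → Matrix (Fin n) (Fin n) ℝ)
    (hJ : ∀ x j i, J x j i = fderiv ℝ F x (Pi.single i 1) j)
    (w : (Fin n → ℝ) → Fin n → ℝ)
    (hw : ∀ x i, w x i = a i * Real.exp (x i) / Real.exp (F x i)) :
    ∀ x : Fin n → ℝ, (J x)ᵀ.mulVec (w x) = w x := by
  intro x
  have : Nonempty (Fin n) := ⟨⟨0, hn⟩⟩
  have : Nonempty (Fin m) := ⟨⟨0, hm⟩⟩
  have hS l := (kTransposeExp_pos hK_pos x l).ne'
  have hG j := kScaled_pos hK_pos hb_pos x j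
  have hF_eq : F = sinkhornMap K b a := funext fun y => funext (hF y)
  have hJ_eq : J x = jacobian K b x := ext fun j i => by
    rw [hJ, hF_eq, fderiv_sinkhornMap_apply_single hS (fun j => (hG j).ne')]
  have hw_eq : w x = fun j => exp (x j) * kScaled K b x j := funext fun j => by
    rw [hw, hF_eq, exp_sinkhornMap (ha_pos j) (hG j)]
    field_simp [(ha_pos j).ne']
  rw [hJ_eq, hw_eq]
  exact transpose_jacobian_mulVec hS fun j => (hG j).ne'

/-- The vector `w(x) = (a ⊙ eˣ) ⊘ e^{F x}` is an eigenvector of the transpose of the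
Jacobian of the Sinkhorn map `F` with eigenvalue `1`: `(dF/dx)(x)ᵀ w(x) = w(x)`. -/
theorem left_eigenvector_of_sinkhorn_jacobian
    (n m : ℕ) (hn : 0 < n) (hm : 0 < m)
    (a : Fin n → ℝ) (b : Fin m → ℝ) (K : Matrix (Fin n) (Fin m) ℝ)
    (ha_pos : ∀ i, 0 < a i) (ha_sum : ∑ i, a i = 1)
    (hb_pos : ∀ j, 0 < b j) (hb_sum : ∑ j, b j = 1)
    (hK_pos : ∀ i j, 0 < K i j)
    (F : (Fin n → ℝ) → Fin n → ℝ)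
    (hF : ∀ x i, F x i = Real.log (a i) -
      Real.log (∑ j, K i j * (b j / ∑ i', K i' j * Real.exp (x i'))))
    (J : (Fin n → ℝ) → Matrix (Fin n) (Fin n) ℝ)
    (hJ : ∀ x j i, J x j i = fderiv ℝ F x (Pi.single i 1) j)
    (w : (Fin n → ℝ) → Fin n → ℝ)
    (hw : ∀ x i, w x i = a i * Real.exp (x i) / Real.exp (F x i)) :
    ∀ x : Fin n → ℝ, (J x)ᵀ.mulVec (w x) = w x :=
  left_eigenvector_of_sinkhorn_jacobian_general n m hn hm a b K ha_pos hb_pos hK_pos F hF J hJ w hw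
end

section
/- For every x ∈ ℝ^n, define v(x) = w(x) / (1_n^T w(x)) where w(x) = (a ⊙ e^x) ⊘ e^{F(x)}, and define the reduced Jacobian G(x) = (dF/dx)(x) − 1_n v(x)^T ∈ ℝ^{n×n}. Then G(x) is diagonalizable over ℝ; more precisely, G(x) · 1_n = 0, every eigenvector u of (dF/dx)(x) with eigenvalue d ≠ 1 satisfies G(x) u = d u, and every eigenvalue λ ∈ ℂ of G(x) satisfies |λ| < 1. -/
open Finset Matrix

/-!
With `h = Kᵀ eˣ` and `g = K (b ⊘ h)` the Jacobian of `F = log a - log g` is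
`J p i = (∑ j, K p j b j K i j e^{x i} / h j²) / g p`. It is a positive row-stochastic matrix
satisfying detailed balance `w p J p i = w i J i p` for the weights `w p = e^{x p} g p`, which are
exactly `(a ⊙ eˣ) ⊘ e^F`; so `v = w / ∑ w` is a left Perron vector of `J`.

`G = J - 1 vᵀ` is the Wielandt deflation of `J` along the Perron pair `(1, v)`: it kills `1`,
keeps every eigenvector of `J` for an eigenvalue `d ≠ 1` (such vectors are `v`-orthogonal), and
still satisfies detailed balance, so it is similar to a symmetric matrix and hence diagonalizable
with real spectrum. A nonzero eigenvalue `d` of `G` has a `v`-orthogonal real eigenvector, which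
is also an eigenvector of `J`. If `|d| ≥ 1`, the maximum principle for positive stochastic
matrices makes it constant, and then `v`-orthogonality makes it zero.
-/

namespace Matrix

variable {ι : Type*} [Fintype ι] [DecidableEq ι]

def IsDiagonalizable {R : Type*} [CommRing R] (A : Matrix ι ι R) : Prop :=
  ∃ (Q : Matrix ι ι R) (d : ι → R), IsUnit Q.det ∧ A = Q * diagonal d * Q⁻¹

theorem IsDiagonalizable.conj {R : Type*} [CommRing R] {A P : Matrix ι ι R}
    (hA : A.IsDiagonalizable) (hP : IsUnit P.det) : (P * A * P⁻¹).IsDiagonalizable := by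
  obtain ⟨Q, d, hQ, rfl⟩ := hA
  refine ⟨P * Q, d, by rw [det_mul]; exact hP.mul hQ, ?_⟩
  rw [mul_inv_rev]
  simp only [Matrix.mul_assoc]

theorem IsHermitian.isDiagonalizable {A : Matrix ι ι ℝ} (hA : A.IsHermitian) :
    A.IsDiagonalizable := by
  have hU := Unitary.coe_star_mul_self hA.eigenvectorUnitary
  refine ⟨hA.eigenvectorUnitary, hA.eigenvalues, isUnit_det_of_left_inverse hU, ?_⟩
  conv_lhs => rw [hA.spectral_theorem]
  rw [Unitary.conjStarAlgAut_apply, inv_eq_left_inv hU]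
  rfl

theorem isDiagonalizable_of_detailed_balance {A : Matrix ι ι ℝ} {w : ι → ℝ}
    (hw : ∀ i, 0 < w i) (hbal : ∀ p i, w p * A p i = w i * A i p) : A.IsDiagonalizable := by
  set s : ι → ℝ := fun i => √(w i)
  have hs : ∀ i, s i ≠ 0 := fun i => (Real.sqrt_pos.2 (hw i)).ne'
  have hss : diagonal s * diagonal s⁻¹ = 1 := by
    rw [diagonal_mul_diagonal, ← diagonal_one]
    exact congrArg diagonal (funext fun i => mul_inv_cancel₀ (hs i))
  have hC : (diagonal s * A * diagonal s⁻¹).IsHermitian := by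
    ext p i
    have h := hbal i p
    rw [← Real.sq_sqrt (hw p).le, ← Real.sq_sqrt (hw i).le] at h
    simp only [conjTranspose_apply, star_trivial, mul_diagonal, diagonal_mul, Pi.inv_apply]
    field_simp [hs p, hs i]
    linear_combination h
  have hA : A = diagonal s⁻¹ * (diagonal s * A * diagonal s⁻¹) * (diagonal s⁻¹)⁻¹ := by
    rw [inv_eq_left_inv hss]
    simp only [← Matrix.mul_assoc, mul_eq_one_comm.1 hss, Matrix.one_mul]
    rw [Matrix.mul_assoc, mul_eq_one_comm.1 hss, Matrix.mul_one]
  rw [hA]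
  exact hC.isDiagonalizable.conj (isUnit_det_of_left_inverse hss)

theorem IsDiagonalizable.exists_eigenvector_of_map_ofReal {A : Matrix ι ι ℝ}
    (hA : A.IsDiagonalizable) {lam : ℂ} {z : ι → ℂ} (hz : z ≠ 0)
    (h : A.map (fun r => (r : ℂ)) *ᵥ z = lam • z) :
    ∃ (r : ℝ) (u : ι → ℝ), lam = r ∧ u ≠ 0 ∧ A *ᵥ u = r • u := by
  obtain ⟨Q, d, hQ, rfl⟩ := hA
  have hQQ : Q * Q⁻¹ = 1 := mul_nonsing_inv Q hQ
  have hQQ' : Q⁻¹ * Q = 1 := nonsing_inv_mul Q hQ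
  let f := Complex.ofRealHom.mapMatrix (m := ι)
  have h' : f (Q * diagonal d * Q⁻¹) *ᵥ z = lam • z := h
  set y := f Q⁻¹ *ᵥ z
  have hy : y ≠ 0 := by
    intro hy0
    apply hz
    rw [← one_mulVec z, ← map_one f, ← hQQ, map_mul, ← mulVec_mulVec]
    exact (congrArg (f Q *ᵥ ·) hy0).trans (mulVec_zero _)
  have hDy : f (diagonal d) *ᵥ y = lam • y := by
    have hcomm : f Q⁻¹ * f (Q * diagonal d * Q⁻¹) = f (diagonal d) * f Q⁻¹ := by
      rw [← map_mul, ← map_mul, ← Matrix.mul_assoc, ← Matrix.mul_assoc, hQQ', Matrix.one_mul]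
    rw [mulVec_mulVec, ← hcomm, ← mulVec_mulVec, h', mulVec_smul]
  obtain ⟨i, hi⟩ := Function.ne_iff.1 hy
  have hdi : lam = d i := by
    have hDyi := congrFun hDy i
    simp only [f, RingHom.mapMatrix_apply, diagonal_map, map_zero, mulVec_diagonal,
      Complex.ofRealHom_eq_coe, Pi.smul_apply, smul_eq_mul, mul_eq_mul_right_iff] at hDyi
    exact (hDyi.resolve_right hi).symm
  refine ⟨d i, Q *ᵥ Pi.single i 1, hdi, fun h0 => ?_, ?_⟩
  · have hQh0 := congrArg (Q⁻¹ *ᵥ ·) h0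
    rw [mulVec_mulVec, hQQ', one_mulVec, mulVec_zero] at hQh0
    simp at hQh0
  · rw [mulVec_mulVec, Matrix.mul_assoc, Matrix.mul_assoc, hQQ', Matrix.mul_one, ← mulVec_mulVec,
      diagonal_mulVec_single, mul_one]
    ext k
    simp [mulVec_single, mul_comm]

end Matrix

section Stochastic

variable {ι : Type*} {J : Matrix ι ι ℝ} {u v w : ι → ℝ} {d : ℝ}

def deflation (J : Matrix ι ι ℝ) (v : ι → ℝ) : Matrix ι ι ℝ := J - vecMulVec (fun _ => 1) v

theorem deflation_detailed_balance (hbal : ∀ p i, w p * J p i = w i * J i p) (c : ℝ) (p i : ι) :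
    w p * deflation J (c • w) p i = w i * deflation J (c • w) i p := by
  simp only [deflation, Matrix.sub_apply, vecMulVec_apply, Pi.smul_apply, smul_eq_mul, one_mul,
    mul_sub, hbal p i]
  ring

variable [Fintype ι]

theorem eq_of_sum_mul_eq_of_le {c : ι → ℝ} {M : ℝ} (hc : ∀ k, 0 < c k) (hc1 : ∑ k, c k = 1)
    (hu : ∀ k, u k ≤ M) (h : ∑ k, c k * u k = M) (k : ι) : u k = M := by
  have hzero : ∑ k, c k * (M - u k) = 0 := by
    simp only [mul_sub, sum_sub_distrib, ← sum_mul, hc1, h, one_mul, sub_self]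
  have hk := (sum_eq_zero_iff_of_nonneg fun k _ => mul_nonneg (hc k).le (sub_nonneg.2 (hu k))).1
    hzero k (mem_univ k)
  linarith [(mul_eq_zero.1 hk).resolve_left (hc k).ne']

-- Maximum principle: at a coordinate `i₀` of maximal modulus, `(J u) i₀ = d u i₀` is a positive
-- convex combination of the `u k`, all of modulus at most `|u i₀| ≤ |d u i₀|`.
theorem exists_eq_const_of_mulVec_eq_smul (hJ : ∀ p i, 0 < J p i) (hrow : ∀ p, ∑ i, J p i = 1)
    (hu : J *ᵥ u = d • u) (hd : 1 ≤ |d|) : ∃ c, u = fun _ => c := by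
  rcases isEmpty_or_nonempty ι with hι | hι
  · exact ⟨0, funext fun i => isEmptyElim i⟩
  obtain ⟨i₀, hi₀⟩ := Finite.exists_max fun k => |u k|
  have hle : |∑ k, J i₀ k * u k| ≤ |u i₀| := calc
    |∑ k, J i₀ k * u k| ≤ ∑ k, J i₀ k * |u k| := by
      simpa only [abs_mul, abs_of_pos (hJ i₀ _)] using
        abs_sum_le_sum_abs (fun k => J i₀ k * u k) univ
    _ ≤ ∑ k, J i₀ k * |u i₀| :=
      sum_le_sum fun k _ => mul_le_mul_of_nonneg_left (hi₀ k) (hJ i₀ k).le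
    _ = |u i₀| := by rw [← sum_mul, hrow, one_mul]
  have hge : |u i₀| ≤ |∑ k, J i₀ k * u k| := by
    rw [show ∑ k, J i₀ k * u k = d * u i₀ from congrFun hu i₀, abs_mul]
    exact le_mul_of_one_le_left (abs_nonneg _) hd
  rcases abs_eq (abs_nonneg (u i₀)) |>.1 (le_antisymm hle hge) with h | h
  · exact ⟨|u i₀|, funext <| eq_of_sum_mul_eq_of_le (hJ i₀) (hrow i₀)
      (fun k => (le_abs_self _).trans (hi₀ k)) h⟩
  · refine ⟨-|u i₀|, funext fun k => ?_⟩
    have hk := eq_of_sum_mul_eq_of_le (u := -u) (hJ i₀) (hrow i₀)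
      (fun k => (neg_le_abs _).trans (hi₀ k)) (by simp [h]) k
    simp only [Pi.neg_apply] at hk
    linarith

theorem vecMul_eq_self_of_detailed_balance (hrow : ∀ p, ∑ i, J p i = 1)
    (hbal : ∀ p i, w p * J p i = w i * J i p) : w ᵥ* J = w := by
  ext i
  simp only [vecMul, dotProduct, hbal, ← mul_sum, hrow, mul_one]

theorem deflation_mulVec (u : ι → ℝ) :
    deflation J v *ᵥ u = J *ᵥ u - (v ⬝ᵥ u) • fun _ => 1 := by
  rw [deflation, sub_mulVec, vecMulVec_mulVec, op_smul_eq_smul]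

theorem deflation_mulVec_one (hrow : ∀ p, ∑ i, J p i = 1) (hv1 : ∑ i, v i = 1) :
    deflation J v *ᵥ (fun _ => 1) = 0 := by
  rw [deflation_mulVec]
  ext p
  simp [mulVec, dotProduct, hrow, hv1]

theorem vecMul_deflation (hvJ : v ᵥ* J = v) (hv1 : ∑ i, v i = 1) : v ᵥ* deflation J v = 0 := by
  rw [deflation, vecMul_sub, vecMul_vecMulVec, hvJ]
  simp [dotProduct, hv1]

theorem dotProduct_eq_zero_of_mulVec_eq_smul (hvJ : v ᵥ* J = v) (hd : d ≠ 1)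
    (hu : J *ᵥ u = d • u) : v ⬝ᵥ u = 0 := by
  have h : d * (v ⬝ᵥ u) = v ⬝ᵥ u := by
    rw [← smul_eq_mul, ← dotProduct_smul, ← hu, dotProduct_mulVec, hvJ]
  have h' : (d - 1) * (v ⬝ᵥ u) = 0 := by rw [sub_mul, h, one_mul, sub_self]
  exact (mul_eq_zero.1 h').resolve_left (sub_ne_zero.2 hd)

theorem deflation_mulVec_eq_smul_of_ne_one (hvJ : v ᵥ* J = v) (hd : d ≠ 1)
    (hu : J *ᵥ u = d • u) : deflation J v *ᵥ u = d • u := by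
  rw [deflation_mulVec, dotProduct_eq_zero_of_mulVec_eq_smul hvJ hd hu, zero_smul, sub_zero, hu]

theorem mulVec_eq_smul_of_deflation_mulVec_eq_smul (hvJ : v ᵥ* J = v) (hv1 : ∑ i, v i = 1)
    (hd : d ≠ 0) (hu : deflation J v *ᵥ u = d • u) : J *ᵥ u = d • u ∧ v ⬝ᵥ u = 0 := by
  have hvu : v ⬝ᵥ u = 0 := by
    have h := congrArg (v ⬝ᵥ ·) hu
    simp only [dotProduct_mulVec, vecMul_deflation hvJ hv1, zero_dotProduct, dotProduct_smul,
      smul_eq_mul] at h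
    exact (mul_eq_zero.1 h.symm).resolve_left hd
  rw [deflation_mulVec, hvu, zero_smul, sub_zero] at hu
  exact ⟨hu, hvu⟩

theorem abs_lt_one_of_deflation_mulVec_eq_smul (hJ : ∀ p i, 0 < J p i)
    (hrow : ∀ p, ∑ i, J p i = 1) (hvJ : v ᵥ* J = v) (hv1 : ∑ i, v i = 1) (hu0 : u ≠ 0)
    (hu : deflation J v *ᵥ u = d • u) : |d| < 1 := by
  by_contra! hd
  have hd0 : d ≠ 0 := by rintro rfl; norm_num at hd
  obtain ⟨hJu, hvu⟩ := mulVec_eq_smul_of_deflation_mulVec_eq_smul hvJ hv1 hd0 hu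
  obtain ⟨c, rfl⟩ := exists_eq_const_of_mulVec_eq_smul hJ hrow hJu hd
  have hc : c = 0 := by simpa [dotProduct, ← sum_mul, hv1] using hvu
  exact hu0 (funext fun _ => hc)

end Stochastic

section Sinkhorn

open Real

variable {ι κ : Type*} [Fintype ι] (b : κ → ℝ) (K : Matrix ι κ ℝ) (x : ι → ℝ)

noncomputable def colExpSum (j : κ) : ℝ := ∑ i, K i j * exp (x i)

theorem colExpSum_pos [Nonempty ι] {K : Matrix ι κ ℝ} (hK : ∀ i j, 0 < K i j) (j : κ) :
    0 < colExpSum K x j :=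
  sum_pos (fun i _ => mul_pos (hK i j) (exp_pos _)) univ_nonempty

theorem hasFDerivAt_colExpSum (j : κ) :
    HasFDerivAt (fun y => colExpSum K y j)
      (∑ i, K i j • exp (x i) • ContinuousLinearMap.proj (R := ℝ) (φ := fun _ : ι => ℝ) i) x :=
  HasFDerivAt.fun_sum fun i _ => (hasFDerivAt_apply i x).exp.const_mul (K i j)

variable [Fintype κ]

noncomputable def rowScaledSum (p : ι) : ℝ := ∑ j, K p j * (b j / colExpSum K x j)

noncomputable def sinkhornJacobian : Matrix ι ι ℝ := fun p i =>
  (∑ j, K p j * b j * (K i j * exp (x i)) / colExpSum K x j ^ 2) / rowScaledSum b K x p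

variable {b K}

theorem rowScaledSum_pos [Nonempty ι] [Nonempty κ] (hK : ∀ i j, 0 < K i j) (hb : ∀ j, 0 < b j)
    (p : ι) : 0 < rowScaledSum b K x p :=
  sum_pos (fun j _ => mul_pos (hK p j) (div_pos (hb j) (colExpSum_pos x hK j))) univ_nonempty

theorem sinkhornJacobian_pos [Nonempty ι] [Nonempty κ] (hK : ∀ i j, 0 < K i j)
    (hb : ∀ j, 0 < b j) (p i : ι) : 0 < sinkhornJacobian b K x p i := by
  refine div_pos (sum_pos (fun j _ => div_pos ?_ (pow_pos (colExpSum_pos x hK j) 2))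
    univ_nonempty) (rowScaledSum_pos x hK hb p)
  exact mul_pos (mul_pos (hK p j) (hb j)) (mul_pos (hK i j) (exp_pos _))

theorem sum_sinkhornJacobian (hh : ∀ j, colExpSum K x j ≠ 0)
    (hg : ∀ p, rowScaledSum b K x p ≠ 0) (p : ι) : ∑ i, sinkhornJacobian b K x p i = 1 := by
  simp only [sinkhornJacobian]
  rw [← sum_div, div_eq_one_iff_eq (hg p), sum_comm, rowScaledSum]
  refine sum_congr rfl fun j _ => ?_
  rw [← sum_div, ← mul_sum, ← colExpSum]
  field_simp [hh j]

theorem sinkhornJacobian_detailed_balance (hg : ∀ p, rowScaledSum b K x p ≠ 0) (p i : ι) :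
    exp (x p) * rowScaledSum b K x p * sinkhornJacobian b K x p i
      = exp (x i) * rowScaledSum b K x i * sinkhornJacobian b K x i p := by
  simp only [sinkhornJacobian, mul_assoc, mul_div_cancel₀ _ (hg _), mul_sum]
  exact sum_congr rfl fun j _ => by ring

theorem hasFDerivAt_rowScaledSum (hh : ∀ j, colExpSum K x j ≠ 0) (p : ι) :
    HasFDerivAt (fun y => rowScaledSum b K y p)
      (∑ j, K p j • b j • (-(colExpSum K x j ^ 2)⁻¹) •
        ∑ i, K i j • exp (x i) • ContinuousLinearMap.proj (R := ℝ) (φ := fun _ : ι => ℝ) i) x :=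
  HasFDerivAt.fun_sum fun j _ => (((hasDerivAt_inv (hh j)).comp_hasFDerivAt x
    (hasFDerivAt_colExpSum K x j)).const_mul (b j)).const_mul (K p j)

theorem fderiv_log_sub_log_rowScaledSum_single [DecidableEq ι] (a : ι → ℝ)
    (hh : ∀ j, colExpSum K x j ≠ 0) (hg : ∀ p, rowScaledSum b K x p ≠ 0) (p i : ι) :
    fderiv ℝ (fun y p => log (a p) - log (rowScaledSum b K y p)) x (Pi.single i 1) p
      = sinkhornJacobian b K x p i := by
  rw [(hasFDerivAt_pi.2 fun p =>
    ((hasFDerivAt_rowScaledSum x hh p).log (hg p)).const_sub (log (a p))).fderiv]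
  simp only [ContinuousLinearMap.coe_pi', _root_.neg_apply, _root_.smul_apply, _root_.sum_apply,
    ContinuousLinearMap.proj_apply, Pi.single_apply, smul_eq_mul, mul_ite, mul_one, mul_zero,
    sum_ite_eq', mem_univ, ↓reduceIte, neg_mul, mul_neg, sum_neg_distrib, neg_neg,
    sinkhornJacobian, div_eq_mul_inv, mul_sum, sum_mul]
  exact sum_congr rfl fun j _ => by ring

end Sinkhorn

theorem reduced_jacobian_properties_general
    (n m : ℕ) (hn : 0 < n) (hm : 0 < m)
    (a : Fin n → ℝ) (b : Fin m → ℝ) (K : Matrix (Fin n) (Fin m) ℝ)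
    (ha_pos : ∀ i, 0 < a i)
    (hb_pos : ∀ j, 0 < b j)
    (hK_pos : ∀ i j, 0 < K i j)
    (F : (Fin n → ℝ) → Fin n → ℝ)
    (hF : ∀ x i, F x i = Real.log (a i) -
      Real.log (∑ j, K i j * (b j / ∑ i', K i' j * Real.exp (x i'))))
    (J : (Fin n → ℝ) → Matrix (Fin n) (Fin n) ℝ)
    (hJ : ∀ x j i, J x j i = fderiv ℝ F x (Pi.single i 1) j)
    (w : (Fin n → ℝ) → Fin n → ℝ)
    (hw : ∀ x i, w x i = a i * Real.exp (x i) / Real.exp (F x i))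
    (v : (Fin n → ℝ) → Fin n → ℝ)
    (hv : ∀ x i, v x i = w x i / ∑ i', w x i')
    (G : (Fin n → ℝ) → Matrix (Fin n) (Fin n) ℝ)
    (hG : ∀ x, G x = J x - Matrix.vecMulVec (fun _ => 1) (v x)) :
    ∀ x : Fin n → ℝ,
      (∃ (Q : Matrix (Fin n) (Fin n) ℝ) (d : Fin n → ℝ),
        IsUnit Q.det ∧ G x = Q * Matrix.diagonal d * Q⁻¹) ∧
      ((G x).mulVec (fun _ => 1) = 0) ∧
      (∀ (u : Fin n → ℝ) (d : ℝ), d ≠ 1 → (J x).mulVec u = d • u →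
        (G x).mulVec u = d • u) ∧
      (∀ lam : ℂ,
        (∃ z : Fin n → ℂ, z ≠ 0 ∧
          ((G x).map (fun r => (r : ℂ))).mulVec z = lam • z) →
        ‖lam‖ < 1) := by
  intro x
  have : Nonempty (Fin n) := Fin.pos_iff_nonempty.1 hn
  have : Nonempty (Fin m) := Fin.pos_iff_nonempty.1 hm
  have hh := fun j => (colExpSum_pos x hK_pos j).ne'
  have hg := rowScaledSum_pos x hK_pos hb_pos
  obtain rfl : F = fun y p => Real.log (a p) - Real.log (rowScaledSum b K y p) := funext₂ hF
  have hJx : J x = sinkhornJacobian b K x := by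
    ext p i
    rw [hJ, fderiv_log_sub_log_rowScaledSum_single x a hh fun p => (hg p).ne']
  have hwx : w x = fun i => Real.exp (x i) * rowScaledSum b K x i := by
    ext i
    rw [hw, Real.exp_sub, Real.exp_log (ha_pos i), Real.exp_log (hg i)]
    field_simp [(ha_pos i).ne', (hg i).ne']
  have hw_pos : ∀ i, 0 < w x i := fun i => hwx ▸ mul_pos (Real.exp_pos _) (hg i)
  have hrow := sum_sinkhornJacobian x hh fun p => (hg p).ne'
  have hbal : ∀ p i, w x p * sinkhornJacobian b K x p i = w x i * sinkhornJacobian b K x i p := by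
    rw [hwx]; exact sinkhornJacobian_detailed_balance x fun p => (hg p).ne'
  set c := (∑ i, w x i)⁻¹
  have hGx : G x = deflation (sinkhornJacobian b K x) (c • w x) := by
    rw [hG x, hJx, deflation, show v x = c • w x from funext fun i => by
      rw [hv, Pi.smul_apply, smul_eq_mul, inv_mul_eq_div]]
  have hv1 : ∑ i, (c • w x) i = 1 := by
    simp [c, ← mul_sum, (sum_pos (fun i _ => hw_pos i) univ_nonempty).ne']
  have hvJ : (c • w x) ᵥ* sinkhornJacobian b K x = c • w x := by
    rw [smul_vecMul, vecMul_eq_self_of_detailed_balance hrow hbal]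
  have hdiag := isDiagonalizable_of_detailed_balance hw_pos (deflation_detailed_balance hbal c)
  rw [hGx, hJx]
  refine ⟨hdiag, deflation_mulVec_one hrow hv1,
    fun u d hd hu => deflation_mulVec_eq_smul_of_ne_one hvJ hd hu, ?_⟩
  rintro lam ⟨z, hz, hlam⟩
  obtain ⟨r, u, rfl, hu0, hu⟩ := hdiag.exists_eigenvector_of_map_ofReal hz hlam
  rw [Complex.norm_real, Real.norm_eq_abs]
  exact abs_lt_one_of_deflation_mulVec_eq_smul (sinkhornJacobian_pos x hK_pos hb_pos) hrow hvJ hv1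
    hu0 hu

/-- The reduced Jacobian `G(x) = (dF/dx)(x) - 1ₙ v(x)ᵀ`, where
`v(x) = w(x) / (1ₙᵀ w(x))` and `w(x) = (a ⊙ eˣ) ⊘ e^{F x}`, is diagonalizable over
`ℝ`; moreover `G(x) 1ₙ = 0`, every eigenvector `u` of `(dF/dx)(x)` with eigenvalue
`d ≠ 1` satisfies `G(x) u = d u`, and every complex eigenvalue of `G(x)` has modulus
strictly smaller than `1`. -/
theorem reduced_jacobian_properties
    (n m : ℕ) (hn : 0 < n) (hm : 0 < m)
    (a : Fin n → ℝ) (b : Fin m → ℝ) (K : Matrix (Fin n) (Fin m) ℝ)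
    (ha_pos : ∀ i, 0 < a i) (ha_sum : ∑ i, a i = 1)
    (hb_pos : ∀ j, 0 < b j) (hb_sum : ∑ j, b j = 1)
    (hK_pos : ∀ i j, 0 < K i j)
    (F : (Fin n → ℝ) → Fin n → ℝ)
    (hF : ∀ x i, F x i = Real.log (a i) -
      Real.log (∑ j, K i j * (b j / ∑ i', K i' j * Real.exp (x i'))))
    (J : (Fin n → ℝ) → Matrix (Fin n) (Fin n) ℝ)
    (hJ : ∀ x j i, J x j i = fderiv ℝ F x (Pi.single i 1) j)
    (w : (Fin n → ℝ) → Fin n → ℝ)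
    (hw : ∀ x i, w x i = a i * Real.exp (x i) / Real.exp (F x i))
    (v : (Fin n → ℝ) → Fin n → ℝ)
    (hv : ∀ x i, v x i = w x i / ∑ i', w x i')
    (G : (Fin n → ℝ) → Matrix (Fin n) (Fin n) ℝ)
    (hG : ∀ x, G x = J x - Matrix.vecMulVec (fun _ => 1) (v x)) :
    ∀ x : Fin n → ℝ,
      (∃ (Q : Matrix (Fin n) (Fin n) ℝ) (d : Fin n → ℝ),
        IsUnit Q.det ∧ G x = Q * Matrix.diagonal d * Q⁻¹) ∧
      ((G x).mulVec (fun _ => 1) = 0) ∧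
      (∀ (u : Fin n → ℝ) (d : ℝ), d ≠ 1 → (J x).mulVec u = d • u →
        (G x).mulVec u = d • u) ∧
      (∀ lam : ℂ,
        (∃ z : Fin n → ℂ, z ≠ 0 ∧
          ((G x).map (fun r => (r : ℂ))).mulVec z = lam • z) →
        ‖lam‖ < 1) :=
  reduced_jacobian_properties_general n m hn hm a b K ha_pos hb_pos hK_pos F hF J hJ w hw v hv G hG
end

section
/- Let ρ ∈ (0,1), c > 0, and let (δ_k)_{k∈ℕ} be a positive real sequence such that δ_{k+1} ≤ (ρ + c ρ^{k+1}) δ_k + c ρ^{k+1} for all k ∈ ℕ. Then for all k ∈ ℕ, δ_k ≤ ρ^{k/2} · exp(c√ρ/(1−ρ)) · (δ_0 + c√ρ/(1−√ρ)). -/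
/-!
With `s = √ρ` the recursion reads `δ (k+1) ≤ (s² + c s^(2k+2)) δ k + c s^(2k+2)`, so `δ` is
dominated by every sequence satisfying the reverse inequality with the same start. One such
sequence is `s^k ∏_{j<k} (1 + c s^(2j+1)) (δ 0 + c ∑_{j<k} s^(j+1))`: one factor `s` of the
coefficient `s²` is absorbed by `s^k`, the other is bounded by `1`. Bounding `1 + x ≤ exp x` and
the two geometric sums gives the claim.
-/

open Finset Real

theorem le_of_subsolution_of_supersolution {u v a b : ℕ → ℝ} (ha : ∀ k, 0 ≤ a k)
    (hu : ∀ k, u (k + 1) ≤ a k * u k + b k) (hv : ∀ k, a k * v k + b k ≤ v (k + 1))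
    (h0 : u 0 ≤ v 0) : ∀ k, u k ≤ v k
  | 0 => h0
  | k + 1 => by
    have ih := le_of_subsolution_of_supersolution ha hu hv h0 k
    calc u (k + 1) ≤ a k * u k + b k := hu k
      _ ≤ a k * v k + b k := by gcongr; exact ha k
      _ ≤ v (k + 1) := hv k

theorem geom_sum_le_inv_one_sub {K : Type*} [Field K] [LinearOrder K] [IsStrictOrderedRing K]
    {x : K} (hx₀ : 0 ≤ x) (hx₁ : x < 1) (n : ℕ) :
    ∑ i ∈ range n, x ^ i ≤ (1 - x)⁻¹ := by
  simpa [← range_eq_Ico] using geom_sum_Ico_le_of_lt_one (m := 0) (n := n) hx₀ hx₁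

def geometricMajorant (s c d : ℝ) (k : ℕ) : ℝ :=
  s ^ k * (∏ j ∈ range k, (1 + c * s ^ (2 * j + 1))) * (d + c * ∑ j ∈ range k, s ^ (j + 1))

section geometricMajorant

variable {s c d : ℝ}

theorem geometricMajorant_zero : geometricMajorant s c d 0 = d := by
  simp [geometricMajorant]

theorem geometricMajorant_supersolution (hs₀ : 0 ≤ s) (hs₁ : s ≤ 1) (hc : 0 ≤ c)
    (hd : 0 ≤ d) (k : ℕ) :
    (s ^ 2 + c * (s ^ 2) ^ (k + 1)) * geometricMajorant s c d k + c * (s ^ 2) ^ (k + 1) ≤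
      geometricMajorant s c d (k + 1) := by
  set P := ∏ j ∈ range k, (1 + c * s ^ (2 * j + 1))
  set S := ∑ j ∈ range k, s ^ (j + 1)
  set x := c * s ^ (2 * k + 1)
  have hx : 0 ≤ x := by positivity
  have hP : 1 ≤ P := one_le_prod fun j _ ↦ le_add_of_nonneg_right (by positivity)
  have hP' : 1 ≤ P * (1 + x) := one_le_mul_of_one_le_of_one_le hP (le_add_of_nonneg_right hx)
  calc (s ^ 2 + c * (s ^ 2) ^ (k + 1)) * geometricMajorant s c d k + c * (s ^ 2) ^ (k + 1)
      = s ^ (k + 1) * (s + x) * P * (d + c * S) + c * s ^ (k + 1) * s ^ (k + 1) := by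
        simp only [geometricMajorant, x]; ring
    _ ≤ s ^ (k + 1) * (1 + x) * P * (d + c * S) +
          c * s ^ (k + 1) * (s ^ (k + 1) * (P * (1 + x))) := by
        gcongr
        exact le_mul_of_one_le_right (by positivity) hP'
    _ = geometricMajorant s c d (k + 1) := by
        simp only [geometricMajorant, prod_range_succ, sum_range_succ, P, S, x]; ring

theorem geometricMajorant_le (hs₀ : 0 ≤ s) (hs₁ : s < 1) (hc : 0 ≤ c) (hd : 0 ≤ d)
    (k : ℕ) :
    geometricMajorant s c d k ≤ s ^ k * exp (c * s / (1 - s ^ 2)) * (d + c * s / (1 - s)) := by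
  have hprod : ∏ j ∈ range k, (1 + c * s ^ (2 * j + 1)) ≤ exp (c * s / (1 - s ^ 2)) := by
    refine (prod_one_add_le_exp_sum _ fun j ↦ by positivity).trans (exp_le_exp.2 ?_)
    calc ∑ j ∈ range k, c * s ^ (2 * j + 1) = c * s * ∑ j ∈ range k, (s ^ 2) ^ j := by
          rw [mul_sum]; exact sum_congr rfl fun j _ ↦ by ring
      _ ≤ c * s * (1 - s ^ 2)⁻¹ := by
          gcongr; exact geom_sum_le_inv_one_sub (by positivity) (by nlinarith) k
      _ = c * s / (1 - s ^ 2) := rfl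
  have hsum : ∑ j ∈ range k, s ^ (j + 1) ≤ s / (1 - s) := by
    calc ∑ j ∈ range k, s ^ (j + 1) = s * ∑ j ∈ range k, s ^ j := by
          rw [mul_sum]; exact sum_congr rfl fun j _ ↦ by ring
      _ ≤ s * (1 - s)⁻¹ := by gcongr; exact geom_sum_le_inv_one_sub hs₀ hs₁ k
  unfold geometricMajorant
  gcongr
  rw [mul_div_assoc]
  gcongr

end geometricMajorant

/-- Application of Gladyshev's convergence to geometric sequences: if `ρ ∈ (0,1)`,
`c > 0` and the positive sequence `(δ k)` satisfies
`δ (k+1) ≤ (ρ + c ρ^(k+1)) δ k + c ρ^(k+1)`, then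
`δ k ≤ ρ^(k/2) exp(c √ρ/(1-ρ)) (δ 0 + c √ρ/(1-√ρ))`. -/
theorem geometric_gladyshev
    (ρ c : ℝ) (hρ : ρ ∈ Set.Ioo (0 : ℝ) 1) (hc : 0 < c)
    (δ : ℕ → ℝ) (hδ_pos : ∀ k, 0 < δ k)
    (hrec : ∀ k, δ (k + 1) ≤ (ρ + c * ρ ^ (k + 1)) * δ k + c * ρ ^ (k + 1)) :
    ∀ k, δ k ≤ Real.sqrt ρ ^ k * Real.exp (c * Real.sqrt ρ / (1 - ρ)) *
      (δ 0 + c * Real.sqrt ρ / (1 - Real.sqrt ρ)) := by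
  obtain ⟨s, hs₀, rfl⟩ : ∃ s, 0 < s ∧ ρ = s ^ 2 :=
    ⟨√ρ, sqrt_pos.2 hρ.1, (sq_sqrt hρ.1.le).symm⟩
  have hs₁ : s < 1 := by nlinarith [hρ.2]
  rw [sqrt_sq hs₀.le]
  intro k
  calc δ k ≤ geometricMajorant s c (δ 0) k :=
        le_of_subsolution_of_supersolution (fun k ↦ by positivity) hrec
          (geometricMajorant_supersolution hs₀.le hs₁.le hc.le (hδ_pos 0).le)
          geometricMajorant_zero.ge k
    _ ≤ _ := geometricMajorant_le hs₀.le hs₁ hc.le (hδ_pos 0).le k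
end

section
/- Let ρ ∈ (0,1), c > 0, and let (δ_k)_{k∈ℕ} be a positive real sequence such that δ_{k+1} ≤ (ρ + c ρ^{k+1}) δ_k + c ρ^{k+1} for all k ∈ ℕ. Then for every k ∈ ℕ with k ≥ ρ/(1−ρ), one has δ_k ≤ ρ^k · exp(1 + c/(1−ρ)) · (δ_0 + c(k+1)). -/
/-- Tighter geometric rate: if `ρ ∈ (0,1)`, `c > 0` and the positive sequence `(δ k)`
satisfies `δ (k+1) ≤ (ρ + c ρ^(k+1)) δ k + c ρ^(k+1)`, then for all `k ≥ ρ/(1-ρ)`,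
`δ k ≤ ρ^k exp(1 + c/(1-ρ)) (δ 0 + c (k+1))`. -/
theorem geometric_gladyshev_tight
    (ρ c : ℝ) (hρ : ρ ∈ Set.Ioo (0 : ℝ) 1) (hc : 0 < c)
    (δ : ℕ → ℝ) (hδ_pos : ∀ k, 0 < δ k)
    (hrec : ∀ k, δ (k + 1) ≤ (ρ + c * ρ ^ (k + 1)) * δ k + c * ρ ^ (k + 1)) :
    ∀ k : ℕ, ρ / (1 - ρ) ≤ (k : ℝ) →
      δ k ≤ ρ ^ k * Real.exp (1 + c / (1 - ρ)) * (δ 0 + c * ((k : ℝ) + 1)) := by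
  obtain ⟨hρ0, hρ1⟩ := hρ
  have h1ρ : (0:ℝ) < 1 - ρ := by linarith
  -- the product bound
  set Q : ℕ → ℝ := fun k => ∏ j ∈ Finset.range k, (1 + c * ρ ^ j) with hQ
  have hQpos : ∀ k, (1:ℝ) ≤ Q k := by
    intro k
    show (1:ℝ) ≤ ∏ j ∈ Finset.range k, (1 + c * ρ ^ j)
    have := Finset.prod_le_prod (s := Finset.range k) (f := fun _ => (1:ℝ))
      (g := fun j => 1 + c * ρ ^ j) (by intros; norm_num)
      (by intro j _; nlinarith [pow_pos hρ0 j])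
    simpa using this
  have key : ∀ k, δ k ≤ ρ ^ k * Q k * (δ 0 + c * k) := by
    intro k
    induction k with
    | zero => simp [hQ]
    | succ n ih =>
      rw [show (((n+1:ℕ)):ℝ) = (n:ℝ)+1 from by push_cast; ring]
      have hQn : Q (n+1) = Q n * (1 + c * ρ ^ n) := by
        simp [hQ, Finset.prod_range_succ]
      have hfac : (ρ + c * ρ ^ (n + 1)) = ρ * (1 + c * ρ ^ n) := by ring
      have hδn := (hδ_pos n).le
      have hQnpos := hQpos n
      have hpow := pow_pos hρ0 n
      calc δ (n+1) ≤ (ρ + c * ρ ^ (n + 1)) * δ n + c * ρ ^ (n + 1) := hrec n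
        _ = ρ * (1 + c * ρ ^ n) * δ n + c * ρ ^ (n + 1) := by rw [hfac]
        _ ≤ ρ * (1 + c * ρ ^ n) * (ρ ^ n * Q n * (δ 0 + c * n)) + c * ρ ^ (n + 1) := by
            have hmul : (0:ℝ) ≤ ρ * (1 + c * ρ ^ n) := by positivity
            nlinarith [mul_le_mul_of_nonneg_left ih hmul]
        _ ≤ ρ ^ (n+1) * Q (n+1) * (δ 0 + c * ((n:ℝ)+1)) := by
            rw [hQn]
            have h1 : ρ * (1 + c * ρ ^ n) * (ρ ^ n * Q n * (δ 0 + c * n))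
                = ρ ^ (n+1) * (Q n * (1 + c * ρ ^ n)) * (δ 0 + c * n) := by ring
            have hQ1 : (1:ℝ) ≤ Q n * (1 + c * ρ ^ n) := by
              nlinarith [mul_nonneg (by linarith : (0:ℝ) ≤ Q n - 1) (mul_pos hc hpow).le]
            have h2 : c * ρ ^ (n+1) ≤ ρ ^ (n+1) * (Q n * (1 + c * ρ ^ n)) * c := by
              have hp := pow_pos hρ0 (n+1)
              nlinarith [mul_nonneg (mul_nonneg hp.le (by linarith : (0:ℝ) ≤ Q n * (1 + c * ρ ^ n) - 1)) hc.le]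
            have hQQ : (0:ℝ) ≤ ρ ^ (n+1) * (Q n * (1 + c * ρ ^ n)) := by
              have hp := pow_pos hρ0 (n+1)
              nlinarith
            nlinarith [mul_nonneg hQQ ((hδ_pos 0).le)]
  -- bound Q k by exp(c/(1-ρ))
  have hQexp : ∀ k, Q k ≤ Real.exp (c / (1 - ρ)) := by
    intro k
    have h1 : Q k ≤ ∏ j ∈ Finset.range k, Real.exp (c * ρ ^ j) := by
      apply Finset.prod_le_prod
      · intro j _
        nlinarith [pow_pos hρ0 j]
      · intro j _
        have := Real.add_one_le_exp (c * ρ ^ j)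
        linarith
    rw [← Real.exp_sum] at h1
    refine h1.trans (Real.exp_le_exp.mpr ?_)
    rw [← Finset.mul_sum]
    have hsum : ∑ j ∈ Finset.range k, ρ ^ j ≤ 1 / (1 - ρ) := by
      have := geom_sum_eq (by linarith : ρ ≠ 1) k
      rw [this, show (ρ ^ k - 1)/(ρ - 1) = (1 - ρ ^ k)/(1 - ρ) from by
        rw [div_eq_div_iff (by linarith) (by linarith)]; ring]
      rw [div_le_div_iff₀ h1ρ h1ρ]
      have hpk : (0:ℝ) ≤ ρ ^ k := (pow_pos hρ0 k).le
      nlinarith [mul_nonneg hpk h1ρ.le]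
    rw [div_eq_mul_inv c, ← one_div]
    exact mul_le_mul_of_nonneg_left hsum hc.le
  intro k hk
  have h1 : δ k ≤ ρ ^ k * Q k * (δ 0 + c * k) := key k
  have hE : Real.exp (c / (1 - ρ)) ≤ Real.exp (1 + c / (1 - ρ)) :=
    Real.exp_le_exp.mpr (by linarith)
  have hQk : Q k ≤ Real.exp (1 + c / (1 - ρ)) := (hQexp k).trans hE
  have hpk : (0:ℝ) ≤ ρ ^ k := (pow_pos hρ0 k).le
  have hd0 : (0:ℝ) < δ 0 := hδ_pos 0
  have hkc : (0:ℝ) ≤ (k:ℝ) := Nat.cast_nonneg k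
  calc δ k ≤ ρ ^ k * Q k * (δ 0 + c * k) := h1
    _ ≤ ρ ^ k * Real.exp (1 + c / (1 - ρ)) * (δ 0 + c * k) := by
        apply mul_le_mul_of_nonneg_right _ (by nlinarith)
        exact mul_le_mul_of_nonneg_left hQk hpk
    _ ≤ ρ ^ k * Real.exp (1 + c / (1 - ρ)) * (δ 0 + c * ((k:ℝ) + 1)) := by
        apply mul_le_mul_of_nonneg_left (by nlinarith)
        positivity
end

section
/- Let ρ ∈ (0,1), let Ḡ ∈ ℝ^{n×n} with operator norm ‖Ḡ‖_op ≤ ρ, let B̄ ∈ ℝ^{n×m}, and let c₀ > 0. Let (G_k)_{k∈ℕ} in ℝ^{n×n} and (B_k)_{k∈ℕ} in ℝ^{n×m} satisfy ‖G_k − Ḡ‖_op ≤ c₀ ρ^{k+1} and ‖B_k − B̄‖ ≤ c₀ ρ^{k+1} for all k ∈ ℕ. Define the recursion D_{k+1} = G_k D_k + B_k from any D_0 ∈ ℝ^{n×m}, and set D̄ = (I − Ḡ)^{-1} B̄ (the matrix I − Ḡ being invertible since ‖Ḡ‖_op < 1). Then for all k ∈ ℕ: ‖D_k − D̄‖ ≤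 ρ^{k/2} · exp(c₀ √ρ (1 + ‖B̄‖)/(1−ρ)²) · (‖D_0‖ + ‖B̄‖/(1−ρ) + c₀ √ρ (1 + ‖B̄‖)/(1−√ρ)²). -/
open Matrix

/-!
With `s = √ρ`, `D̄ = (I - Ḡ)⁻¹ B̄` is the fixed point `D̄ = Ḡ D̄ + B̄`, so `‖D̄‖ (1 - ρ) ≤ ‖B̄‖`, and
`D_{k+1} - D̄ = G_k (D_k - D̄) + (G_k - Ḡ) D̄ + (B_k - B̄)` gives for `e_k = ‖D_k - D̄‖`
`e_{k+1} ≤ ρ (1 + c₀ ρ^k) e_k + c₀ ρ^{k+1} (1 + ‖D̄‖)`.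
Spending only one factor `s` of each contraction `ρ = s · s` on the decay, the other one absorbs the
perturbations: by induction
`e_k ≤ s^k ∏_{j<k} (1 + c₀ s^{2j+1}) (e_0 + ∑_{j<k} c₀ s^{j+1} (1 + ‖D̄‖))`,
and the product is at most `exp (c₀ s / (1 - ρ))` while the sum is at most `c₀ s (1 + ‖D̄‖) / (1 - s)`.
-/

/-- Frobenius norm of a real matrix. -/
noncomputable def frobNorm {n m : ℕ} (M : Matrix (Fin n) (Fin m) ℝ) : ℝ :=
  Real.sqrt (∑ i, ∑ j, (M i j) ^ 2)

/-- Operator norm (induced by the Euclidean norms) of a real matrix. -/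
noncomputable def l2OpNorm {n m : ℕ} (M : Matrix (Fin n) (Fin m) ℝ) : ℝ :=
  ‖LinearMap.toContinuousLinearMap (Matrix.toEuclideanLin M)‖

section Frobenius

attribute [local instance] Matrix.frobeniusNormedAddCommGroup

variable {n m : ℕ}

lemma frobNorm_eq_norm (M : Matrix (Fin n) (Fin m) ℝ) : frobNorm M = ‖M‖ := by
  simp [frobNorm, frobenius_norm_def, Real.sqrt_eq_rpow]

lemma frobNorm_nonneg (M : Matrix (Fin n) (Fin m) ℝ) : 0 ≤ frobNorm M :=
  Real.sqrt_nonneg _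

lemma frobNorm_add_le (A B : Matrix (Fin n) (Fin m) ℝ) :
    frobNorm (A + B) ≤ frobNorm A + frobNorm B := by
  simpa only [frobNorm_eq_norm] using norm_add_le A B

lemma frobNorm_sub_le (A B : Matrix (Fin n) (Fin m) ℝ) :
    frobNorm (A - B) ≤ frobNorm A + frobNorm B := by
  simpa only [frobNorm_eq_norm] using norm_sub_le A B

end Frobenius

section L2Operator

open scoped Matrix.Norms.L2Operator

variable {n m : ℕ}

lemma l2OpNorm_add_le (A B : Matrix (Fin n) (Fin m) ℝ) :
    l2OpNorm (A + B) ≤ l2OpNorm A + l2OpNorm B :=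
  norm_add_le A B

lemma isUnit_one_sub_of_l2OpNorm_lt_one {G : Matrix (Fin n) (Fin n) ℝ} (hG : l2OpNorm G < 1) :
    IsUnit (1 - G) :=
  have : CompleteSpace (Matrix (Fin n) (Fin n) ℝ) := FiniteDimensional.complete ℝ _
  isUnit_one_sub_of_norm_lt_one hG

lemma frobNorm_sq {k : ℕ} (X : Matrix (Fin k) (Fin m) ℝ) :
    frobNorm X ^ 2 = ∑ j, ‖(WithLp.toLp 2 fun i => X i j : EuclideanSpace ℝ (Fin k))‖ ^ 2 := by
  rw [frobNorm, Real.sq_sqrt (by positivity), Finset.sum_comm]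
  simp [EuclideanSpace.norm_sq_eq]

lemma frobNorm_mul_le {k : ℕ} (M : Matrix (Fin n) (Fin k) ℝ) (X : Matrix (Fin k) (Fin m) ℝ) :
    frobNorm (M * X) ≤ l2OpNorm M * frobNorm X := by
  have hcol : ∀ j, (WithLp.toLp 2 fun i => (M * X) i j : EuclideanSpace ℝ (Fin n)) =
      (EuclideanSpace.equiv (Fin n) ℝ).symm (M *ᵥ WithLp.toLp 2 fun i => X i j) := by
    intro j; ext i; simp [mul_apply, mulVec, dotProduct]
  refine (sq_le_sq₀ (frobNorm_nonneg _) (mul_nonneg (norm_nonneg _) (frobNorm_nonneg X))).mp ?_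
  rw [mul_pow, frobNorm_sq, frobNorm_sq, Finset.mul_sum]
  gcongr with j
  rw [hcol, ← mul_pow]
  exact pow_le_pow_left₀ (norm_nonneg _) (l2_opNorm_mulVec M _) 2

end L2Operator

section FixedPoint

variable {n m : ℕ}

lemma one_sub_inv_mul_eq_add {G : Matrix (Fin n) (Fin n) ℝ} (hG : l2OpNorm G < 1)
    (B : Matrix (Fin n) (Fin m) ℝ) :
    (1 - G)⁻¹ * B = G * ((1 - G)⁻¹ * B) + B := by
  have hdet : IsUnit (1 - G).det :=
    (isUnit_iff_isUnit_det _).mp (isUnit_one_sub_of_l2OpNorm_lt_one hG)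
  have hsolve : (1 - G) * ((1 - G)⁻¹ * B) = B := by
    rw [← Matrix.mul_assoc, mul_nonsing_inv _ hdet, Matrix.one_mul]
  calc (1 - G)⁻¹ * B = G * ((1 - G)⁻¹ * B) + (1 - G) * ((1 - G)⁻¹ * B) := by
        rw [Matrix.sub_mul, Matrix.one_mul]; abel
    _ = G * ((1 - G)⁻¹ * B) + B := by rw [hsolve]

variable {Gbar : Matrix (Fin n) (Fin n) ℝ} {Bbar Dbar : Matrix (Fin n) (Fin m) ℝ}

lemma frobNorm_mul_one_sub_le_of_eq_add {ρ : ℝ} (hGbar : l2OpNorm Gbar ≤ ρ)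
    (hfix : Dbar = Gbar * Dbar + Bbar) :
    frobNorm Dbar * (1 - ρ) ≤ frobNorm Bbar := by
  have : frobNorm Dbar ≤ ρ * frobNorm Dbar + frobNorm Bbar :=
    calc frobNorm Dbar = frobNorm (Gbar * Dbar + Bbar) := by rw [← hfix]
      _ ≤ frobNorm (Gbar * Dbar) + frobNorm Bbar := frobNorm_add_le _ _
      _ ≤ l2OpNorm Gbar * frobNorm Dbar + frobNorm Bbar := by gcongr; exact frobNorm_mul_le _ _
      _ ≤ ρ * frobNorm Dbar + frobNorm Bbar := by gcongr; exact frobNorm_nonneg _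
  linarith

lemma frobNorm_mul_add_sub_le_of_eq_add {ρ ε : ℝ} (hfix : Dbar = Gbar * Dbar + Bbar)
    (hGbar : l2OpNorm Gbar ≤ ρ) {G : Matrix (Fin n) (Fin n) ℝ} {B : Matrix (Fin n) (Fin m) ℝ}
    (hG : l2OpNorm (G - Gbar) ≤ ε) (hB : frobNorm (B - Bbar) ≤ ε) (D : Matrix (Fin n) (Fin m) ℝ) :
    frobNorm (G * D + B - Dbar) ≤ (ρ + ε) * frobNorm (D - Dbar) + ε * (1 + frobNorm Dbar) := by
  have hsplit : G * D + B - Dbar = G * (D - Dbar) + ((G - Gbar) * Dbar + (B - Bbar)) := by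
    conv_lhs => rw [hfix]
    rw [Matrix.mul_sub, Matrix.sub_mul]
    abel
  have hGρε : l2OpNorm G ≤ ρ + ε := by
    linarith [sub_add_cancel G Gbar ▸ l2OpNorm_add_le (G - Gbar) Gbar]
  rw [hsplit]
  linarith [frobNorm_add_le (G * (D - Dbar)) ((G - Gbar) * Dbar + (B - Bbar)),
    frobNorm_add_le ((G - Gbar) * Dbar) (B - Bbar), frobNorm_mul_le G (D - Dbar),
    frobNorm_mul_le (G - Gbar) Dbar, mul_le_mul_of_nonneg_right hGρε (frobNorm_nonneg (D - Dbar)),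
    mul_le_mul_of_nonneg_right hG (frobNorm_nonneg Dbar)]

end FixedPoint

section PerturbedContraction

open Finset

variable {s c C : ℝ} {e : ℕ → ℝ}

lemma le_pow_mul_prod_mul_of_perturbed_contraction (hs0 : 0 ≤ s) (hs1 : s ≤ 1) (hc : 0 ≤ c)
    (hC : 0 ≤ C) (he0 : 0 ≤ e 0)
    (he : ∀ k, e (k + 1) ≤ (s ^ 2 + c * (s ^ 2) ^ (k + 1)) * e k + c * (s ^ 2) ^ (k + 1) * C)
    (k : ℕ) :
    e k ≤ s ^ k * (∏ j ∈ range k, (1 + c * s ^ (2 * j + 1))) *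
      (e 0 + ∑ j ∈ range k, c * s ^ (j + 1) * C) := by
  induction k with
  | zero => simp
  | succ k ih =>
    set P := ∏ j ∈ range k, (1 + c * s ^ (2 * j + 1))
    set S := e 0 + ∑ j ∈ range k, c * s ^ (j + 1) * C
    set x := s ^ k
    have hx : 0 ≤ x := pow_nonneg hs0 k
    have hP : 1 ≤ P := one_le_prod fun j _ => le_add_of_nonneg_right (by positivity)
    have hS : 0 ≤ S := add_nonneg he0 (sum_nonneg fun j _ => by positivity)
    have hgap : x * s * P * (1 + c * (x ^ 2 * s)) * (S + c * (x * s) * C) -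
        ((s ^ 2 + c * (x * s) ^ 2) * (x * P * S) + c * (x * s) ^ 2 * C) =
        x * s * (1 - s) * P * S + c * (x * s) ^ 2 * C * (P - 1) +
          c ^ 2 * x ^ 4 * s ^ 3 * P * C := by ring
    have hterms : 0 ≤ x * s * (1 - s) * P * S + c * (x * s) ^ 2 * C * (P - 1) +
        c ^ 2 * x ^ 4 * s ^ 3 * P * C := by
      have : 0 ≤ 1 - s := sub_nonneg.mpr hs1
      have : 0 ≤ P - 1 := sub_nonneg.mpr hP
      positivity
    have hpow : (s ^ 2) ^ (k + 1) = (x * s) ^ 2 := by rw [← pow_mul, mul_comm, pow_mul, mul_pow]; ring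
    calc e (k + 1) ≤ (s ^ 2 + c * (x * s) ^ 2) * e k + c * (x * s) ^ 2 * C := hpow ▸ he k
      _ ≤ (s ^ 2 + c * (x * s) ^ 2) * (x * P * S) + c * (x * s) ^ 2 * C := by gcongr
      _ ≤ x * s * P * (1 + c * (x ^ 2 * s)) * (S + c * (x * s) * C) := by linarith
      _ = _ := by
        rw [prod_range_succ, sum_range_succ, pow_succ, ← add_assoc]
        congr 1
        ring

lemma geom_sum_range_le_inv {x : ℝ} (hx0 : 0 ≤ x) (hx1 : x < 1) (k : ℕ) :
    ∑ j ∈ range k, x ^ j ≤ (1 - x)⁻¹ := by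
  simpa only [← range_eq_Ico, pow_zero, one_div] using
    geom_sum_Ico_le_of_lt_one (m := 0) (n := k) hx0 hx1

lemma prod_one_add_mul_pow_le_exp (hs0 : 0 ≤ s) (hs1 : s < 1) (hc : 0 ≤ c) (k : ℕ) :
    ∏ j ∈ range k, (1 + c * s ^ (2 * j + 1)) ≤ Real.exp (c * s / (1 - s ^ 2)) := by
  refine (Real.prod_one_add_le_exp_sum _ fun j => by positivity).trans (Real.exp_le_exp.mpr ?_)
  have hgeom := geom_sum_range_le_inv (sq_nonneg s) (by nlinarith) k
  calc ∑ j ∈ range k, c * s ^ (2 * j + 1) = c * s * ∑ j ∈ range k, (s ^ 2) ^ j := by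
        rw [mul_sum]; congr! 1 with j; ring
    _ ≤ c * s * (1 - s ^ 2)⁻¹ := by gcongr
    _ = c * s / (1 - s ^ 2) := rfl

lemma sum_mul_pow_succ_mul_le (hs0 : 0 ≤ s) (hs1 : s < 1) (hc : 0 ≤ c) (hC : 0 ≤ C) (k : ℕ) :
    ∑ j ∈ range k, c * s ^ (j + 1) * C ≤ c * s * C / (1 - s) := by
  calc ∑ j ∈ range k, c * s ^ (j + 1) * C = c * s * C * ∑ j ∈ range k, s ^ j := by
        rw [mul_sum]; congr! 1 with j; ring
    _ ≤ c * s * C * (1 - s)⁻¹ := by gcongr; exact geom_sum_range_le_inv hs0 hs1 k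
    _ = c * s * C / (1 - s) := rfl

lemma le_pow_mul_exp_mul_of_perturbed_contraction (hs0 : 0 ≤ s) (hs1 : s < 1) (hc : 0 ≤ c)
    (hC : 0 ≤ C) (he0 : 0 ≤ e 0)
    (he : ∀ k, e (k + 1) ≤ (s ^ 2 + c * (s ^ 2) ^ (k + 1)) * e k + c * (s ^ 2) ^ (k + 1) * C)
    (k : ℕ) :
    e k ≤ s ^ k * Real.exp (c * s / (1 - s ^ 2)) * (e 0 + c * s * C / (1 - s)) := by
  refine (le_pow_mul_prod_mul_of_perturbed_contraction hs0 hs1.le hc hC he0 he k).trans ?_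
  have hS : 0 ≤ e 0 + ∑ j ∈ range k, c * s ^ (j + 1) * C :=
    add_nonneg he0 (sum_nonneg fun j _ => by positivity)
  gcongr
  · exact prod_one_add_mul_pow_le_exp hs0 hs1 hc k
  · exact sum_mul_pow_succ_mul_le hs0 hs1 hc hC k

lemma mul_div_one_sub_le_mul_div_one_sub_sq {a r M F : ℝ} (ha : 0 ≤ a) (hr : r < 1)
    (hMF : M * (1 - r) ≤ F + r) :
    a * (1 + M) / (1 - r) ≤ a * (1 + F) / (1 - r) ^ 2 := by
  have hr' : 0 < 1 - r := sub_pos.mpr hr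
  have h : (1 + M) * (1 - r) ≤ 1 + F := by linarith
  rw [div_le_div_iff₀ hr' (by positivity)]
  calc a * (1 + M) * (1 - r) ^ 2 = a * (1 - r) * ((1 + M) * (1 - r)) := by ring
    _ ≤ a * (1 - r) * (1 + F) := mul_le_mul_of_nonneg_left h (mul_nonneg ha hr'.le)
    _ = a * (1 + F) * (1 - r) := by ring

lemma exp_mul_add_le_of_mul_one_sub_sq_le {d e₀ M F : ℝ} (hs0 : 0 ≤ s) (hs1 : s < 1)
    (hc : 0 ≤ c) (hM0 : 0 ≤ M) (hMF : M * (1 - s ^ 2) ≤ F) (he₀0 : 0 ≤ e₀) (he₀ : e₀ ≤ d + M) :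
    Real.exp (c * s / (1 - s ^ 2)) * (e₀ + c * s * (1 + M) / (1 - s)) ≤
      Real.exp (c * s * (1 + F) / (1 - s ^ 2) ^ 2) *
        (d + F / (1 - s ^ 2) + c * s * (1 + F) / (1 - s) ^ 2) := by
  have hs2 : s ^ 2 < 1 := by nlinarith
  have hF : 0 ≤ F := (mul_nonneg hM0 (sub_pos.mpr hs2).le).trans hMF
  have hstart : 0 ≤ e₀ + c * s * (1 + M) / (1 - s) :=
    add_nonneg he₀0 (div_nonneg (by positivity) (sub_pos.mpr hs1).le)
  have hMs : M * (1 - s) ≤ F + s := by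
    have : 1 - s ≤ 1 - s ^ 2 := by nlinarith
    nlinarith [mul_le_mul_of_nonneg_left this hM0]
  gcongr Real.exp ?_ * ?_
  · simpa only [add_zero, mul_one] using
      mul_div_one_sub_le_mul_div_one_sub_sq (a := c * s) (M := 0) (by positivity) hs2
        (by linarith [sq_nonneg s] : 0 * (1 - s ^ 2) ≤ F + s ^ 2)
  · refine add_le_add ?_ (mul_div_one_sub_le_mul_div_one_sub_sq (by positivity) hs1 hMs)
    linarith [(le_div_iff₀ (sub_pos.mpr hs2)).mpr hMF]

end PerturbedContraction

theorem reduced_perturbed_convergence_general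
    (n m : ℕ)
    (ρ c₀ : ℝ) (hρ : ρ ∈ Set.Ioo (0 : ℝ) 1) (hc₀ : 0 < c₀)
    (Gbar : Matrix (Fin n) (Fin n) ℝ) (hGbar : l2OpNorm Gbar ≤ ρ)
    (Bbar : Matrix (Fin n) (Fin m) ℝ)
    (G : ℕ → Matrix (Fin n) (Fin n) ℝ) (B : ℕ → Matrix (Fin n) (Fin m) ℝ)
    (hG : ∀ k, l2OpNorm (G k - Gbar) ≤ c₀ * ρ ^ (k + 1))
    (hB : ∀ k, frobNorm (B k - Bbar) ≤ c₀ * ρ ^ (k + 1))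
    (D : ℕ → Matrix (Fin n) (Fin m) ℝ)
    (hD : ∀ k, D (k + 1) = G k * D k + B k) :
    ∀ k : ℕ,
      frobNorm (D k - (1 - Gbar)⁻¹ * Bbar) ≤
        Real.sqrt ρ ^ k *
          Real.exp (c₀ * Real.sqrt ρ * (1 + frobNorm Bbar) / (1 - ρ) ^ 2) *
          (frobNorm (D 0) + frobNorm Bbar / (1 - ρ) +
            c₀ * Real.sqrt ρ * (1 + frobNorm Bbar) / (1 - Real.sqrt ρ) ^ 2) := by
  obtain ⟨hρ0, hρ1⟩ := hρ
  set s := Real.sqrt ρ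
  have hs0 : 0 ≤ s := Real.sqrt_nonneg ρ
  have hs1 : s < 1 := (Real.sqrt_lt' one_pos).mpr (by rwa [one_pow])
  have hsρ : s ^ 2 = ρ := Real.sq_sqrt hρ0.le
  set Dbar := (1 - Gbar)⁻¹ * Bbar
  have hfix : Dbar = Gbar * Dbar + Bbar := one_sub_inv_mul_eq_add (hGbar.trans_lt hρ1) Bbar
  have hM : frobNorm Dbar * (1 - ρ) ≤ frobNorm Bbar := frobNorm_mul_one_sub_le_of_eq_add hGbar hfix
  have hrec (k : ℕ) : frobNorm (D (k + 1) - Dbar) ≤ (s ^ 2 + c₀ * (s ^ 2) ^ (k + 1)) *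
      frobNorm (D k - Dbar) + c₀ * (s ^ 2) ^ (k + 1) * (1 + frobNorm Dbar) := by
    rw [hsρ, hD k]
    exact frobNorm_mul_add_sub_le_of_eq_add hfix hGbar (hG k) (hB k) (D k)
  intro k
  rw [← hsρ] at hM ⊢
  calc frobNorm (D k - Dbar)
      ≤ s ^ k * Real.exp (c₀ * s / (1 - s ^ 2)) *
          (frobNorm (D 0 - Dbar) + c₀ * s * (1 + frobNorm Dbar) / (1 - s)) :=
        le_pow_mul_exp_mul_of_perturbed_contraction (e := fun k => frobNorm (D k - Dbar)) hs0 hs1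
          hc₀.le (add_nonneg zero_le_one (frobNorm_nonneg _)) (frobNorm_nonneg _) hrec k
    _ ≤ _ := by
      rw [mul_assoc (s ^ k), mul_assoc (s ^ k)]
      exact mul_le_mul_of_nonneg_left (exp_mul_add_le_of_mul_one_sub_sq_le hs0 hs1 hc₀.le
        (frobNorm_nonneg _) hM (frobNorm_nonneg _) (frobNorm_sub_le (D 0) Dbar)) (pow_nonneg hs0 k)

/-- Reduced perturbed convergence: for a contraction `Ḡ` with `‖Ḡ‖_op ≤ ρ < 1`,
perturbed iterations `D (k+1) = G k * D k + B k` with geometrically converging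
`G k → Ḡ` and `B k → B̄` converge to `D̄ = (I - Ḡ)⁻¹ B̄` with rate `√ρ` and explicit
constants. -/
theorem reduced_perturbed_convergence
    (n m : ℕ) (hn : 0 < n) (hm : 0 < m)
    (ρ c₀ : ℝ) (hρ : ρ ∈ Set.Ioo (0 : ℝ) 1) (hc₀ : 0 < c₀)
    (Gbar : Matrix (Fin n) (Fin n) ℝ) (hGbar : l2OpNorm Gbar ≤ ρ)
    (Bbar : Matrix (Fin n) (Fin m) ℝ)
    (G : ℕ → Matrix (Fin n) (Fin n) ℝ) (B : ℕ → Matrix (Fin n) (Fin m) ℝ)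
    (hG : ∀ k, l2OpNorm (G k - Gbar) ≤ c₀ * ρ ^ (k + 1))
    (hB : ∀ k, frobNorm (B k - Bbar) ≤ c₀ * ρ ^ (k + 1))
    (D : ℕ → Matrix (Fin n) (Fin m) ℝ)
    (hD : ∀ k, D (k + 1) = G k * D k + B k) :
    ∀ k : ℕ,
      frobNorm (D k - (1 - Gbar)⁻¹ * Bbar) ≤
        Real.sqrt ρ ^ k *
          Real.exp (c₀ * Real.sqrt ρ * (1 + frobNorm Bbar) / (1 - ρ) ^ 2) *
          (frobNorm (D 0) + frobNorm Bbar / (1 - ρ) +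
            c₀ * Real.sqrt ρ * (1 + frobNorm Bbar) / (1 - Real.sqrt ρ) ^ 2) :=
  reduced_perturbed_convergence_general n m ρ c₀ hρ hc₀ Gbar hGbar Bbar G B hG hB D hD
end
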